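/- arXiv:2303.16075 — 8 statements merged into one kernel-verified Lean document; each statement's English description precedes it below -/
import Mathlib

section
/- In the degenerate case of the seesaw lemma: if 0 → U → V → W → 0 is a short exact sequence of nonzero quiver representations with μ_α(U) = μ_α(V) = μ_α(W), then V is α-semistable if and only if both U and W are α-semistable. -/
open scoped BigOperators

/-- A finite-dimensional representation of a quiver with vertex set `Q₀`,
edge set `Q₁`, source map `σ` and target map `τ`, over a field `K`. -/
structure QRep (Q₀ Q₁ : Type) (σ τ : Q₁ → Q₀) (K : Type) [Field K] where
  V : Q₀ → Type
  [addgrp : ∀ x, AddCommGroup (V x)]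
  [mod : ∀ x, Module K (V x)]
  [fd : ∀ x, FiniteDimensional K (V x)]
  f : ∀ e, V (σ e) →ₗ[K] V (τ e)

attribute [instance] QRep.addgrp QRep.mod QRep.fd

namespace QRep

variable {Q₀ Q₁ : Type} {σ τ : Q₁ → Q₀} {K : Type} [Field K]

/-- A family of subspaces forms a subrepresentation if it is invariant under the edge maps. -/
def IsSubrep (M : QRep Q₀ Q₁ σ τ K) (W : ∀ x, Submodule K (M.V x)) : Prop :=
  ∀ e, Submodule.map (M.f e) (W (σ e)) ≤ W (τ e)

variable [Fintype Q₀]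

/-- The slope of a dimension vector along a central charge `α`. -/
noncomputable def slopeVec (α : Q₀ → ℝ) (d : Q₀ → ℕ) : ℝ :=
  (∑ x, α x * (d x : ℝ)) / (∑ x, (d x : ℝ))

/-- The dimension vector of a representation. -/
noncomputable def dimVec (M : QRep Q₀ Q₁ σ τ K) (x : Q₀) : ℕ :=
  Module.finrank K (M.V x)

/-- The dimension vector of a family of subspaces. -/
noncomputable def dimVecOf (M : QRep Q₀ Q₁ σ τ K) (W : ∀ x, Submodule K (M.V x)) (x : Q₀) : ℕ :=
  Module.finrank K (W x)

/-- The slope of a representation along a central charge `α`. -/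
noncomputable def slope (α : Q₀ → ℝ) (M : QRep Q₀ Q₁ σ τ K) : ℝ :=
  slopeVec α (dimVec M)

def Nonzero (M : QRep Q₀ Q₁ σ τ K) : Prop := ∃ x, dimVec M x ≠ 0

/-- `α`-semistability: every nonzero subrepresentation has slope at most the slope of `M`. -/
def Semistable (α : Q₀ → ℝ) (M : QRep Q₀ Q₁ σ τ K) : Prop :=
  ∀ W, IsSubrep M W → (∃ x, W x ≠ ⊥) → slopeVec α (dimVecOf M W) ≤ slope α M

/-- `α`-stability: every nonzero proper subrepresentation has slope strictly less
than the slope of `M`. -/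
def Stable (α : Q₀ → ℝ) (M : QRep Q₀ Q₁ σ τ K) : Prop :=
  ∀ W, IsSubrep M W → (∃ x, W x ≠ ⊥) → (∃ x, W x ≠ ⊤) →
    slopeVec α (dimVecOf M W) < slope α M

/-- The subrepresentation determined by an invariant family of subspaces, as a representation. -/
noncomputable def subrep (M : QRep Q₀ Q₁ σ τ K) (W : ∀ x, Submodule K (M.V x))
    (h : IsSubrep M W) : QRep Q₀ Q₁ σ τ K where
  V x := W x
  f e := (M.f e).restrict (fun v hv => h e ⟨v, hv, rfl⟩)

/-- The quotient representation of `M` by an invariant family of subspaces. -/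
noncomputable def quotRep (M : QRep Q₀ Q₁ σ τ K) (W : ∀ x, Submodule K (M.V x))
    (h : IsSubrep M W) : QRep Q₀ Q₁ σ τ K where
  V x := M.V x ⧸ W x
  f e := Submodule.mapQ _ _ (M.f e) (Submodule.map_le_iff_le_comap.mp (h e))

/-- The direct sum of two representations. -/
noncomputable def prodRep (M N : QRep Q₀ Q₁ σ τ K) : QRep Q₀ Q₁ σ τ K where
  V x := M.V x × N.V x
  f e := (M.f e).prodMap (N.f e)

end QRep


section Helpers

open QRep Module

variable {Q₀ Q₁ : Type} [Fintype Q₀] {σ τ : Q₁ → Q₀} {K : Type} [Field K]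

private lemma sum_dim_pos {d : Q₀ → ℕ} (h : ∃ x, d x ≠ 0) : (0:ℝ) < ∑ x, (d x : ℝ) := by
  obtain ⟨x, hx⟩ := h
  exact Finset.sum_pos' (fun i _ => by positivity)
    ⟨x, Finset.mem_univ x, by exact_mod_cast Nat.pos_of_ne_zero hx⟩

private lemma slopeVec_eq {d : Q₀ → ℕ} (α : Q₀ → ℝ) (hd : (0:ℝ) < ∑ x, (d x : ℝ)) (μ : ℝ) :
    QRep.slopeVec α d = μ ↔ ∑ x, α x * (d x : ℝ) = μ * ∑ x, (d x : ℝ) := by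
  rw [QRep.slopeVec, div_eq_iff hd.ne']

private lemma slopeVec_le {d : Q₀ → ℕ} (α : Q₀ → ℝ) (hd : (0:ℝ) < ∑ x, (d x : ℝ)) (μ : ℝ) :
    QRep.slopeVec α d ≤ μ ↔ ∑ x, α x * (d x : ℝ) ≤ μ * ∑ x, (d x : ℝ) := by
  rw [QRep.slopeVec, div_le_iff₀ hd]

private lemma finrank_eq_map_add_inf_ker {M N : Type} [AddCommGroup M] [Module K M]
    [AddCommGroup N] [Module K N] [FiniteDimensional K M]
    (f : M →ₗ[K] N) (p : Submodule K M) :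
    finrank K p = finrank K (p.map f) + finrank K ↥(p ⊓ LinearMap.ker f) := by
  have h := LinearMap.finrank_range_add_finrank_ker (f.domRestrict p)
  rw [LinearMap.range_domRestrict, LinearMap.ker_domRestrict] at h
  have h2 : finrank K ↥(p ⊓ LinearMap.ker f)
      = finrank K ↥((LinearMap.ker f).comap p.subtype) := by
    rw [← Submodule.map_comap_subtype, Submodule.finrank_map_subtype_eq]
  omega

end Helpers

/-- **Seesaw lemma (degenerate case).** If `0 → U → V → W → 0` is a short exact sequence
of nonzero quiver representations with `μ_α(U) = μ_α(V) = μ_α(W)`, then `V` is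
`α`-semistable iff both `U` and `W` are `α`-semistable. -/
theorem seesaw_semistable_iff {Q₀ Q₁ : Type} [Fintype Q₀] {σ τ : Q₁ → Q₀}
    {K : Type} [Field K] (α : Q₀ → ℝ)
    (V : QRep Q₀ Q₁ σ τ K) (U : ∀ x, Submodule K (V.V x)) (hU : QRep.IsSubrep V U)
    (hUnz : QRep.Nonzero (QRep.subrep V U hU))
    (hWnz : QRep.Nonzero (QRep.quotRep V U hU))
    (h1 : QRep.slope α (QRep.subrep V U hU) = QRep.slope α V)
    (h2 : QRep.slope α V = QRep.slope α (QRep.quotRep V U hU)) :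
    QRep.Semistable α V ↔
      QRep.Semistable α (QRep.subrep V U hU) ∧
      QRep.Semistable α (QRep.quotRep V U hU) := by
  classical
  set μ := QRep.slope α V with hμ
  have ne_bot_iff : ∀ {M : Type} [AddCommGroup M] [Module K M] [FiniteDimensional K M]
      (p : Submodule K M), p ≠ ⊥ ↔ Module.finrank K p ≠ 0 := by
    intro M _ _ _ p
    exact (not_congr Submodule.finrank_eq_zero).symm
  -- dimensions of U
  have hsU : (0:ℝ) < ∑ x, (QRep.dimVec (QRep.subrep V U hU) x : ℝ) := sum_dim_pos hUnz
  have haU : ∑ x, α x * (QRep.dimVec (QRep.subrep V U hU) x : ℝ)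
      = μ * ∑ x, (QRep.dimVec (QRep.subrep V U hU) x : ℝ) :=
    (slopeVec_eq α hsU μ).mp h1
  have hUleP : ∀ x (T : Submodule K (V.V x ⧸ U x)), U x ≤ (T).comap (U x).mkQ := by
    intro x T u hu
    have : (U x).mkQ u = 0 := by
      simpa [Submodule.mkQ_apply, Submodule.Quotient.mk_eq_zero] using hu
    simpa [Submodule.mem_comap, this] using T.zero_mem
  constructor
  · intro hV
    constructor
    · -- U is semistable
      intro W' hW' hW'nz
      set W'' : ∀ x, Submodule K (V.V x) := fun x => (W' x).map (U x).subtype with hW''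
      have hsub : QRep.IsSubrep V W'' := by
        intro e
        rintro _ ⟨_, ⟨w, hw, rfl⟩, rfl⟩
        exact ⟨(QRep.subrep V U hU).f e w, hW' e ⟨w, hw, rfl⟩, rfl⟩
      have hdim : QRep.dimVecOf V W'' = QRep.dimVecOf (QRep.subrep V U hU) W' :=
        funext fun x => Submodule.finrank_map_subtype_eq (U x) (W' x)
      have hnz : ∃ x, W'' x ≠ ⊥ := by
        obtain ⟨x, hx⟩ := hW'nz
        refine ⟨x, (ne_bot_iff _).mpr ?_⟩
        have := congrFun hdim x
        rw [QRep.dimVecOf] at this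
        rw [this]
        exact (ne_bot_iff _).mp hx
      rw [h1, ← hdim]
      exact hV W'' hsub hnz
    · -- quotient is semistable
      intro T hT hTnz
      set P : ∀ x, Submodule K (V.V x) := fun x => (T x).comap (U x).mkQ with hP
      have hPsub : QRep.IsSubrep V P := by
        intro e
        rintro _ ⟨v, hv, rfl⟩
        have h0 : (QRep.quotRep V U hU).f e ((U (σ e)).mkQ v) ∈ T (τ e) :=
          hT e ⟨(U (σ e)).mkQ v, hv, rfl⟩
        have h1' : (QRep.quotRep V U hU).f e ((U (σ e)).mkQ v)
            = (U (τ e)).mkQ (V.f e v) := by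
          simp [QRep.quotRep, Submodule.mkQ_apply, Submodule.mapQ_apply]; rfl
        rw [h1'] at h0
        exact h0
      have hPnz : ∃ x, P x ≠ ⊥ := by
        obtain ⟨x, hx⟩ := hUnz
        refine ⟨x, ?_⟩
        have hUx : U x ≠ ⊥ := (ne_bot_iff _).mpr hx
        intro hbot
        exact hUx (le_bot_iff.mp (hbot ▸ hUleP x (T x)))
      have hPdim : ∀ x, QRep.dimVecOf V P x
          = QRep.dimVec (QRep.subrep V U hU) x + QRep.dimVecOf (QRep.quotRep V U hU) T x := by
        intro x
        have hL := finrank_eq_map_add_inf_ker ((U x).mkQ) (P x)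
        have hmap : (P x).map (U x).mkQ = T x :=
          Submodule.map_comap_eq_of_surjective (Submodule.mkQ_surjective (U x)) (T x)
        have hker : P x ⊓ LinearMap.ker (U x).mkQ = U x := by
          rw [Submodule.ker_mkQ]
          exact inf_eq_right.mpr (hUleP x (T x))
        rw [hmap, hker] at hL
        exact hL.trans (Nat.add_comm _ _)
      have hmain := hV P hPsub hPnz
      have htT : (0:ℝ) < ∑ x, (QRep.dimVecOf (QRep.quotRep V U hU) T x : ℝ) := by
        apply sum_dim_pos
        obtain ⟨x, hx⟩ := hTnz
        exact ⟨x, (ne_bot_iff _).mp hx⟩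
      have hsP : (0:ℝ) < ∑ x, (QRep.dimVecOf V P x : ℝ) := by
        apply sum_dim_pos
        obtain ⟨x, hx⟩ := hPnz
        exact ⟨x, (ne_bot_iff _).mp hx⟩
      rw [← hμ, slopeVec_le α hsP μ] at hmain
      rw [← h2, slopeVec_le α htT μ]
      have e1 : ∑ x, α x * (QRep.dimVecOf V P x : ℝ)
          = ∑ x, α x * (QRep.dimVec (QRep.subrep V U hU) x : ℝ)
            + ∑ x, α x * (QRep.dimVecOf (QRep.quotRep V U hU) T x : ℝ) := by
        rw [← Finset.sum_add_distrib]
        refine Finset.sum_congr rfl fun x _ => ?_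
        rw [hPdim x]; push_cast; ring
      have e2 : ∑ x, (QRep.dimVecOf V P x : ℝ)
          = ∑ x, (QRep.dimVec (QRep.subrep V U hU) x : ℝ)
            + ∑ x, (QRep.dimVecOf (QRep.quotRep V U hU) T x : ℝ) := by
        rw [← Finset.sum_add_distrib]
        refine Finset.sum_congr rfl fun x _ => ?_
        rw [hPdim x]; push_cast; ring
      rw [e1, e2, mul_add] at hmain
      linarith
  · rintro ⟨hUs, hWs⟩
    intro V' hV' hV'nz
    set A : ∀ x, Submodule K ((QRep.subrep V U hU).V x) :=
      fun x => (V' x).comap (U x).subtype with hA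
    set B : ∀ x, Submodule K ((QRep.quotRep V U hU).V x) :=
      fun x => (V' x).map (U x).mkQ with hB
    have hAsub : QRep.IsSubrep (QRep.subrep V U hU) A := by
      intro e
      rintro _ ⟨u, hu, rfl⟩
      show ((U (τ e)).subtype) ((QRep.subrep V U hU).f e u) ∈ V' (τ e)
      exact hV' e ⟨(U (σ e)).subtype u, hu, rfl⟩
    have hBsub : QRep.IsSubrep (QRep.quotRep V U hU) B := by
      intro e
      rintro _ ⟨_, ⟨v, hv, rfl⟩, rfl⟩
      refine ⟨V.f e v, hV' e ⟨v, hv, rfl⟩, ?_⟩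
      rfl
    have hdim : ∀ x, QRep.dimVecOf V V' x
        = QRep.dimVecOf (QRep.subrep V U hU) A x
          + QRep.dimVecOf (QRep.quotRep V U hU) B x := by
      intro x
      have hL := finrank_eq_map_add_inf_ker ((U x).mkQ) (V' x)
      have h3 : QRep.dimVecOf (QRep.subrep V U hU) A x
          = Module.finrank K ↥(V' x ⊓ LinearMap.ker (U x).mkQ) := by
        rw [Submodule.ker_mkQ, inf_comm (V' x) (U x),
          ← Submodule.map_comap_subtype (U x) (V' x)]
        exact (Submodule.finrank_map_subtype_eq (U x)
          (Submodule.comap (U x).subtype (V' x))).symm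
      have h4 : QRep.dimVecOf (QRep.quotRep V U hU) B x
          = Module.finrank K ↥(Submodule.map (U x).mkQ (V' x)) := rfl
      rw [h3, h4]
      exact hL.trans (Nat.add_comm _ _)
    have hAineq : ∑ x, α x * (QRep.dimVecOf (QRep.subrep V U hU) A x : ℝ)
        ≤ μ * ∑ x, (QRep.dimVecOf (QRep.subrep V U hU) A x : ℝ) := by
      by_cases hA0 : ∃ x, A x ≠ ⊥
      · have hsA : (0:ℝ) < ∑ x, (QRep.dimVecOf (QRep.subrep V U hU) A x : ℝ) := by
          apply sum_dim_pos
          obtain ⟨x, hx⟩ := hA0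
          exact ⟨x, (ne_bot_iff _).mp hx⟩
        have := hUs A hAsub hA0
        rw [h1, slopeVec_le α hsA μ] at this
        exact this
      · push_neg at hA0
        have hz : ∀ x, QRep.dimVecOf (QRep.subrep V U hU) A x = 0 := by
          intro x
          exact Submodule.finrank_eq_zero.mpr (hA0 x)
        simp [hz]
    have hBineq : ∑ x, α x * (QRep.dimVecOf (QRep.quotRep V U hU) B x : ℝ)
        ≤ μ * ∑ x, (QRep.dimVecOf (QRep.quotRep V U hU) B x : ℝ) := by
      by_cases hB0 : ∃ x, B x ≠ ⊥
      · have hsB : (0:ℝ) < ∑ x, (QRep.dimVecOf (QRep.quotRep V U hU) B x : ℝ) := by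
          apply sum_dim_pos
          obtain ⟨x, hx⟩ := hB0
          exact ⟨x, (ne_bot_iff _).mp hx⟩
        have := hWs B hBsub hB0
        rw [← h2, slopeVec_le α hsB μ] at this
        exact this
      · push_neg at hB0
        have hz : ∀ x, QRep.dimVecOf (QRep.quotRep V U hU) B x = 0 := by
          intro x
          exact Submodule.finrank_eq_zero.mpr (hB0 x)
        simp [hz]
    have hsV' : (0:ℝ) < ∑ x, (QRep.dimVecOf V V' x : ℝ) := by
      apply sum_dim_pos
      obtain ⟨x, hx⟩ := hV'nz
      exact ⟨x, (ne_bot_iff _).mp hx⟩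
    rw [show QRep.slope α V = μ from rfl, slopeVec_le α hsV' μ]
    have e1 : ∑ x, α x * (QRep.dimVecOf V V' x : ℝ)
        = ∑ x, α x * (QRep.dimVecOf (QRep.subrep V U hU) A x : ℝ)
          + ∑ x, α x * (QRep.dimVecOf (QRep.quotRep V U hU) B x : ℝ) := by
      rw [← Finset.sum_add_distrib]
      refine Finset.sum_congr rfl fun x _ => ?_
      rw [hdim x]; push_cast; ring
    have e2 : ∑ x, (QRep.dimVecOf V V' x : ℝ)
        = ∑ x, (QRep.dimVecOf (QRep.subrep V U hU) A x : ℝ)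
          + ∑ x, (QRep.dimVecOf (QRep.quotRep V U hU) B x : ℝ) := by
      rw [← Finset.sum_add_distrib]
      refine Finset.sum_congr rfl fun x _ => ?_
      rw [hdim x]; push_cast; ring
    rw [e1, e2, mul_add]
    linarith
end

section
/- If α : Q₀ → ℝ is a complete central charge for an acyclic quiver Q (meaning that equality of Harder-Narasimhan types along α implies isomorphism of representations), then every indecomposable representation in Rep(Q) is α-stable. -/
open scoped BigOperators

namespace QRep

variable {Q₀ Q₁ : Type} {σ τ : Q₁ → Q₀} {K : Type} [Field K] [Fintype Q₀]

/-- The dimension vector of the subquotient `B/A`. -/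
noncomputable def quotDimVec (M : QRep Q₀ Q₁ σ τ K) (A B : ∀ x, Submodule K (M.V x))
    (x : Q₀) : ℕ :=
  Module.finrank K (B x) - Module.finrank K (A x)

/-- Semistability of the subquotient `B/A` of `M`, expressed via the correspondence
between subrepresentations of `B/A` and subrepresentations `Z` of `M` with `A ≤ Z ≤ B`. -/
def SemistableQuot (α : Q₀ → ℝ) (M : QRep Q₀ Q₁ σ τ K)
    (A B : ∀ x, Submodule K (M.V x)) : Prop :=
  ∀ Z, IsSubrep M Z → (∀ x, A x ≤ Z x) → (∀ x, Z x ≤ B x) → (∃ x, Z x ≠ A x) →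
    slopeVec α (quotDimVec M A Z) ≤ slopeVec α (quotDimVec M A B)

/-- A Harder–Narasimhan filtration of `M` along the central charge `α`:
a strictly increasing finite filtration by subrepresentations, starting at `0`
and ending at `M`, whose successive quotients are `α`-semistable of strictly
decreasing slopes. -/
structure HNFiltration (α : Q₀ → ℝ) (M : QRep Q₀ Q₁ σ τ K) where
  n : ℕ
  W : Fin (n+1) → ∀ x, Submodule K (M.V x)
  subrep : ∀ i, IsSubrep M (W i)
  bot : ∀ x, W 0 x = ⊥
  top : ∀ x, W (Fin.last n) x = ⊤
  mono : ∀ (i : Fin n) (x : Q₀), W i.castSucc x ≤ W i.succ x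
  proper : ∀ i : Fin n, ∃ x, W i.castSucc x ≠ W i.succ x
  ss : ∀ i : Fin n, SemistableQuot α M (W i.castSucc) (W i.succ)
  dec : ∀ i j : Fin n, i < j →
    slopeVec α (quotDimVec M (W j.castSucc) (W j.succ)) <
      slopeVec α (quotDimVec M (W i.castSucc) (W i.succ))

open scoped Classical in
/-- The Harder–Narasimhan type of a filtration, viewed as a function `ℝ → (Q₀ → ℕ)`
sending a slope to the dimension vector of the corresponding semistable subquotient
(and to `0` if no subquotient has that slope). -/
noncomputable def HNFiltration.typeFun {α : Q₀ → ℝ} {M : QRep Q₀ Q₁ σ τ K}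
    (F : HNFiltration α M) : ℝ → Q₀ → ℕ := fun lam x =>
  ∑ i : Fin F.n,
    if slopeVec α (quotDimVec M (F.W i.castSucc) (F.W i.succ)) = lam then
      quotDimVec M (F.W i.castSucc) (F.W i.succ) x
    else 0

/-- An isomorphism of quiver representations. -/
structure RepIso (M N : QRep Q₀ Q₁ σ τ K) where
  g : ∀ x, M.V x ≃ₗ[K] N.V x
  comm : ∀ e v, g (τ e) (M.f e v) = N.f e (g (σ e) v)

/-- Two representations have equal HN type along `α`. -/
def SameHNType (α : Q₀ → ℝ) (M N : QRep Q₀ Q₁ σ τ K) : Prop :=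
  ∃ (F : HNFiltration α M) (G : HNFiltration α N), F.typeFun = G.typeFun

/-- A central charge is complete if equality of HN types implies isomorphism. -/
def Complete (α : Q₀ → ℝ) : Prop :=
  ∀ M N : QRep Q₀ Q₁ σ τ K, SameHNType α M N → Nonempty (RepIso M N)

/-- A representation is indecomposable if it is nonzero and admits no nontrivial
direct sum decomposition. -/
def Indecomposable (M : QRep Q₀ Q₁ σ τ K) : Prop :=
  Nonzero M ∧ ∀ A B : QRep Q₀ Q₁ σ τ K,
    Nonempty (RepIso M (prodRep A B)) → ¬(Nonzero A ∧ Nonzero B)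

end QRep

/-- An acyclic quiver: there is no directed cycle, i.e. no composable sequence of
edges whose endpoint returns to its starting point. -/
def QuiverAcyclic {Q₀ Q₁ : Type} (σ τ : Q₁ → Q₀) : Prop :=
  ∀ (n : ℕ) (p : Fin (n+1) → Q₁),
    (∀ i : Fin n, τ (p i.castSucc) = σ (p i.succ)) → σ (p 0) ≠ τ (p (Fin.last n))

set_option linter.unusedSectionVars false
namespace QRep

open Module Submodule

variable {Q₀ Q₁ : Type} {σ τ : Q₁ → Q₀} {K : Type} [Field K] [Fintype Q₀]

/-! ### Arithmetic helpers for slopes -/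

noncomputable def wsum (α : Q₀ → ℝ) (d : Q₀ → ℕ) : ℝ := ∑ x, α x * (d x : ℝ)

noncomputable def ssum (d : Q₀ → ℕ) : ℝ := ∑ x, (d x : ℝ)

lemma slopeVec_def (α : Q₀ → ℝ) (d : Q₀ → ℕ) : slopeVec α d = wsum α d / ssum d := rfl

lemma ssum_nonneg (d : Q₀ → ℕ) : 0 ≤ ssum d :=
  Finset.sum_nonneg fun x _ => by positivity

lemma ssum_pos (d : Q₀ → ℕ) (h : ∃ x, d x ≠ 0) : 0 < ssum d := by
  obtain ⟨x, hx⟩ := h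
  refine Finset.sum_pos' (fun y _ => by positivity) ⟨x, Finset.mem_univ x, ?_⟩
  exact_mod_cast Nat.pos_of_ne_zero hx

lemma ssum_eq_zero (d : Q₀ → ℕ) (h : ∀ x, d x = 0) : ssum d = 0 := by
  unfold ssum; simp [h]

lemma wsum_eq_zero (α : Q₀ → ℝ) (d : Q₀ → ℕ) (h : ∀ x, d x = 0) : wsum α d = 0 := by
  unfold wsum; simp [h]

lemma slopeVec_le_iff {α : Q₀ → ℝ} {d : Q₀ → ℕ} {c : ℝ} (h : 0 < ssum d) :
    slopeVec α d ≤ c ↔ wsum α d ≤ c * ssum d := by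
  rw [slopeVec_def, div_le_iff₀ h]

lemma le_slopeVec_iff {α : Q₀ → ℝ} {d : Q₀ → ℕ} {c : ℝ} (h : 0 < ssum d) :
    c ≤ slopeVec α d ↔ c * ssum d ≤ wsum α d := by
  rw [slopeVec_def, le_div_iff₀ h]

lemma slopeVec_lt_iff {α : Q₀ → ℝ} {d : Q₀ → ℕ} {c : ℝ} (h : 0 < ssum d) :
    slopeVec α d < c ↔ wsum α d < c * ssum d := by
  rw [slopeVec_def, div_lt_iff₀ h]

lemma lt_slopeVec_iff {α : Q₀ → ℝ} {d : Q₀ → ℕ} {c : ℝ} (h : 0 < ssum d) :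
    c < slopeVec α d ↔ c * ssum d < wsum α d := by
  rw [slopeVec_def, lt_div_iff₀ h]

lemma slopeVec_eq_iff {α : Q₀ → ℝ} {d : Q₀ → ℕ} {c : ℝ} (h : 0 < ssum d) :
    slopeVec α d = c ↔ wsum α d = c * ssum d := by
  rw [slopeVec_def, div_eq_iff (ne_of_gt h)]

lemma wsum_congr (α : Q₀ → ℝ) {d e : Q₀ → ℕ} (h : ∀ x, d x = e x) : wsum α d = wsum α e := by
  unfold wsum; exact Finset.sum_congr rfl fun x _ => by rw [h x]

lemma ssum_congr {d e : Q₀ → ℕ} (h : ∀ x, d x = e x) : ssum d = ssum e := by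
  unfold ssum; exact Finset.sum_congr rfl fun x _ => by rw [h x]

lemma wsum_add (α : Q₀ → ℝ) (d e : Q₀ → ℕ) :
    wsum α (fun x => d x + e x) = wsum α d + wsum α e := by
  unfold wsum
  rw [← Finset.sum_add_distrib]
  exact Finset.sum_congr rfl fun x _ => by push_cast; ring

lemma ssum_add (d e : Q₀ → ℕ) :
    ssum (fun x => d x + e x) = ssum d + ssum e := by
  unfold ssum
  rw [← Finset.sum_add_distrib]
  exact Finset.sum_congr rfl fun x _ => by push_cast; ring

/-! ### Basic subrepresentation facts -/

variable {M : QRep Q₀ Q₁ σ τ K}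

lemma isSubrep_bot (M : QRep Q₀ Q₁ σ τ K) : IsSubrep M (fun _ => ⊥) := by
  intro e
  simp [Submodule.map_bot]

lemma isSubrep_top (M : QRep Q₀ Q₁ σ τ K) : IsSubrep M (fun _ => ⊤) := by
  intro e
  exact le_top

lemma quotDimVec_bot (M : QRep Q₀ Q₁ σ τ K) (Z : ∀ x, Submodule K (M.V x)) :
    quotDimVec M (fun _ => ⊥) Z = dimVecOf M Z := by
  funext x
  simp [quotDimVec, dimVecOf, finrank_bot]

lemma quotDimVec_bot_top (M : QRep Q₀ Q₁ σ τ K) :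
    quotDimVec M (fun _ => ⊥) (fun _ => ⊤) = dimVec M := by
  funext x
  simp [quotDimVec, dimVec, finrank_bot, finrank_top]

lemma quotDimVec_add (M : QRep Q₀ Q₁ σ τ K) {A U Z : ∀ x, Submodule K (M.V x)}
    (hAU : ∀ x, A x ≤ U x) (hUZ : ∀ x, U x ≤ Z x) (x : Q₀) :
    quotDimVec M A Z x = quotDimVec M A U x + quotDimVec M U Z x := by
  have h1 := Submodule.finrank_mono (hAU x)
  have h2 := Submodule.finrank_mono (hUZ x)
  unfold quotDimVec
  omega

/-- Codimension of a family of subspaces. -/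
noncomputable def codim (M : QRep Q₀ Q₁ σ τ K) (A : ∀ x, Submodule K (M.V x)) : ℕ :=
  ∑ x, (Module.finrank K (M.V x) - Module.finrank K (A x))

end QRep
set_option linter.unusedSectionVars false

section LinAlg

open Module Submodule LinearMap

variable {K V W : Type} [Field K] [AddCommGroup V] [Module K V] [AddCommGroup W] [Module K W]

/-- D4 -/
lemma finrank_prod_submodule [FiniteDimensional K V] [FiniteDimensional K W]
    (p : Submodule K V) (q : Submodule K W) :
    finrank K (p.prod q) = finrank K p + finrank K q := by
  have hinj : Function.Injective (p.subtype.prodMap q.subtype) := by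
    rw [LinearMap.coe_prodMap]
    exact p.injective_subtype.prodMap q.injective_subtype
  have hr : LinearMap.range (p.subtype.prodMap q.subtype) = p.prod q := by
    apply le_antisymm
    · rintro z ⟨⟨a, b⟩, rfl⟩
      exact ⟨a.2, b.2⟩
    · rintro ⟨a, b⟩ ⟨ha, hb⟩
      exact ⟨(⟨a, ha⟩, ⟨b, hb⟩), rfl⟩
  have e := LinearEquiv.ofInjective _ hinj
  rw [hr] at e
  rw [← e.finrank_eq, Module.finrank_prod]

/-- D1 -/
lemma finrank_decomp_prod [FiniteDimensional K V] [FiniteDimensional K W]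
    (Z : Submodule K (V × W)) :
    finrank K Z = finrank K (Z.comap (LinearMap.inl K V W))
      + finrank K (Z.map (LinearMap.snd K V W)) := by
  have hg : LinearMap.range ((LinearMap.snd K V W).comp Z.subtype)
      = Z.map (LinearMap.snd K V W) := by
    rw [LinearMap.range_comp, Submodule.range_subtype]
  have hker : LinearMap.ker ((LinearMap.snd K V W).comp Z.subtype)
      = Submodule.comap Z.subtype (LinearMap.ker (LinearMap.snd K V W)) := by
    rw [LinearMap.ker_comp]
  have h1 : finrank K (LinearMap.ker ((LinearMap.snd K V W).comp Z.subtype))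
      = finrank K (Z.comap (LinearMap.inl K V W)) := by
    rw [hker]
    have e1 : (Submodule.comap Z.subtype (LinearMap.ker (LinearMap.snd K V W)))
        ≃ₗ[K] (Submodule.map Z.subtype (Submodule.comap Z.subtype
            (LinearMap.ker (LinearMap.snd K V W)))) :=
      Submodule.equivMapOfInjective _ Z.injective_subtype _
    rw [e1.finrank_eq, Submodule.map_comap_subtype]
    have h2 : Z ⊓ LinearMap.ker (LinearMap.snd K V W)
        = Submodule.map (LinearMap.inl K V W) (Z.comap (LinearMap.inl K V W)) := by
      rw [Submodule.map_comap_eq, LinearMap.range_inl, inf_comm]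
    rw [h2]
    exact ((Submodule.equivMapOfInjective _ LinearMap.inl_injective _).finrank_eq).symm
  have := LinearMap.finrank_range_add_finrank_ker ((LinearMap.snd K V W).comp Z.subtype)
  rw [hg, h1] at this
  have hz : finrank K Z = finrank K ((⊤ : Submodule K Z)) := (finrank_top K Z).symm
  omega

/-- D5 -/
lemma submodule_eq_top_prod (Z : Submodule K (V × W))
    (h : (⊤ : Submodule K V).prod (⊥ : Submodule K W) ≤ Z) :
    Z = (⊤ : Submodule K V).prod (Z.map (LinearMap.snd K V W)) := by
  apply le_antisymm
  · rintro ⟨a, b⟩ hab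
    exact ⟨trivial, ⟨(a, b), hab, rfl⟩⟩
  · rintro ⟨a, b⟩ ⟨-, ⟨⟨a', b'⟩, hz, hb⟩⟩
    simp only at hb
    subst hb
    have h1 : ((a - a', 0) : V × W) ∈ Z := h ⟨trivial, rfl⟩
    have := Z.add_mem h1 hz
    simpa using this
  
/-- D7 -/
lemma map_snd_prod (p : Submodule K V) (q : Submodule K W) :
    (p.prod q).map (LinearMap.snd K V W) = q := by
  apply le_antisymm
  · rintro b ⟨⟨a, b'⟩, ⟨ha, hb⟩, rfl⟩
    exact hb
  · intro b hb
    exact ⟨(0, b), ⟨p.zero_mem, hb⟩, rfl⟩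

variable [FiniteDimensional K V]

/-- D2 -/
lemma finrank_map_mkQ_add (U p : Submodule K V) (h : U ≤ p) :
    finrank K (p.map U.mkQ) + finrank K U = finrank K p := by
  have hg : LinearMap.range (U.mkQ.comp p.subtype) = p.map U.mkQ := by
    rw [LinearMap.range_comp, Submodule.range_subtype]
  have hker : finrank K (LinearMap.ker (U.mkQ.comp p.subtype)) = finrank K U := by
    rw [LinearMap.ker_comp, Submodule.ker_mkQ]
    exact (Submodule.comapSubtypeEquivOfLe h).finrank_eq
  have := LinearMap.finrank_range_add_finrank_ker (U.mkQ.comp p.subtype)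
  rw [hg, hker] at this
  exact this

/-- D3 -/
lemma finrank_comap_mkQ (U : Submodule K V) (R : Submodule K (V ⧸ U)) :
    finrank K (R.comap U.mkQ) = finrank K R + finrank K U := by
  have hle : U ≤ R.comap U.mkQ := by
    intro v hv
    have : U.mkQ v = 0 := by rwa [← LinearMap.mem_ker, Submodule.ker_mkQ]
    simp [Submodule.mem_comap, this]
  have hmap : (R.comap U.mkQ).map U.mkQ = R := by
    rw [Submodule.map_comap_eq, Submodule.range_mkQ, top_inf_eq]
  have := finrank_map_mkQ_add U (R.comap U.mkQ) hle
  rw [hmap] at this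
  omega

/-- D8 -/
lemma comap_map_mkQ (U p : Submodule K V) (h : U ≤ p) :
    (p.map U.mkQ).comap U.mkQ = p := by
  rw [Submodule.comap_map_eq, Submodule.ker_mkQ, sup_eq_left.mpr h]

end LinAlg
namespace QRep

open Module Submodule

variable {Q₀ Q₁ : Type} {σ τ : Q₁ → Q₀} {K : Type} [Field K] [Fintype Q₀]
variable {M : QRep Q₀ Q₁ σ τ K}

lemma quot_ssum_pos {A U : ∀ x, Submodule K (M.V x)} (hle : ∀ x, A x ≤ U x)
    (hne : ∃ x, U x ≠ A x) : 0 < ssum (quotDimVec M A U) := by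
  obtain ⟨x, hx⟩ := hne
  apply ssum_pos
  refine ⟨x, ?_⟩
  have hlt : Module.finrank K (A x) < Module.finrank K (U x) :=
    Submodule.finrank_lt_finrank_of_lt (lt_of_le_of_ne (hle x) (Ne.symm hx))
  unfold quotDimVec
  omega

lemma ne_of_finrank_lt {x : Q₀} {A Z : Submodule K (M.V x)}
    (h : Module.finrank K A < Module.finrank K Z) : Z ≠ A := by
  intro he
  rw [he] at h
  omega

/-- The maximal destabilizing subrepresentation above `A`: maximal slope, then
maximal dimension. -/
lemma exists_maximizer (α : Q₀ → ℝ) (M : QRep Q₀ Q₁ σ τ K)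
    (A : ∀ x, Submodule K (M.V x)) (hA : IsSubrep M A) (hAtop : ∃ x, A x ≠ ⊤) :
    ∃ U, IsSubrep M U ∧ (∀ x, A x ≤ U x) ∧ (∃ x, U x ≠ A x) ∧
      (∀ Z, IsSubrep M Z → (∀ x, A x ≤ Z x) → (∃ x, Z x ≠ A x) →
        slopeVec α (quotDimVec M A Z) ≤ slopeVec α (quotDimVec M A U) ∧
        (slopeVec α (quotDimVec M A Z) = slopeVec α (quotDimVec M A U) →
          ssum (quotDimVec M A Z) ≤ ssum (quotDimVec M A U))) := by
  classical
  set S : Set (Q₀ → ℕ) := {d | ∃ Z, IsSubrep M Z ∧ (∀ x, A x ≤ Z x) ∧ (∃ x, Z x ≠ A x) ∧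
      quotDimVec M A Z = d} with hS
  have hSfin : S.Finite := by
    apply Set.Finite.subset (Set.Finite.pi (fun x : Q₀ => Set.finite_Iic
      (Module.finrank K (M.V x))))
    rintro d ⟨Z, -, -, -, rfl⟩
    intro x _
    have h1 : Module.finrank K (Z x) ≤ Module.finrank K (M.V x) := Submodule.finrank_le _
    simp only [Set.mem_Iic]
    unfold quotDimVec
    omega
  have hSne : S.Nonempty := by
    refine ⟨quotDimVec M A (fun _ => ⊤), (fun _ => ⊤), isSubrep_top M, fun x => le_top, ?_, rfl⟩
    obtain ⟨x, hx⟩ := hAtop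
    exact ⟨x, Ne.symm hx⟩
  obtain ⟨c, hcT, hc⟩ := Set.Finite.exists_maximalFor id (slopeVec α '' S)
    (hSfin.image _) (hSne.image _)
  have hcub : ∀ b ∈ slopeVec α '' S, b ≤ c := by
    intro b hb
    by_contra hb'
    push_neg at hb'
    exact absurd (hc hb hb'.le) (not_le.mpr hb')
  set S2 : Set (Q₀ → ℕ) := {d | d ∈ S ∧ slopeVec α d = c} with hS2
  have hS2fin : S2.Finite := hSfin.subset fun d hd => hd.1
  have hS2ne : S2.Nonempty := by
    obtain ⟨d, hdS, hdc⟩ := hcT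
    exact ⟨d, hdS, hdc⟩
  obtain ⟨d₀, hd₀, -⟩ := Set.Finite.exists_maximalFor ssum S2 hS2fin hS2ne
  obtain ⟨d₀, hd₀, hmax2⟩ := Set.Finite.exists_maximalFor ssum S2 hS2fin hS2ne
  have hub2 : ∀ d ∈ S2, ssum d ≤ ssum d₀ := by
    intro d hd
    by_contra hd'
    push_neg at hd'
    exact absurd (hmax2 hd hd'.le) (not_le.mpr hd')
  obtain ⟨U, hU1, hU2, hU3, hU4⟩ := hd₀.1
  refine ⟨U, hU1, hU2, hU3, ?_⟩
  intro Z hZ1 hZ2 hZ3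
  have hZS : quotDimVec M A Z ∈ S := ⟨Z, hZ1, hZ2, hZ3, rfl⟩
  have hslopeU : slopeVec α (quotDimVec M A U) = c := by rw [hU4]; exact hd₀.2
  constructor
  · rw [hslopeU]
    exact hcub _ ⟨quotDimVec M A Z, hZS, rfl⟩
  · intro he
    have hmem : quotDimVec M A Z ∈ S2 := ⟨hZS, by rw [he, hslopeU]⟩
    have := hub2 _ hmem
    rwa [hU4]

/-- Key step: any strictly larger subrepresentation has subquotient slope strictly
below the slope of the maximal destabilizer. -/
lemma maximizer_step (α : Q₀ → ℝ) (M : QRep Q₀ Q₁ σ τ K)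
    {A U : ∀ x, Submodule K (M.V x)}
    (hUle : ∀ x, A x ≤ U x) (hUne : ∃ x, U x ≠ A x)
    (hmax : ∀ Z, IsSubrep M Z → (∀ x, A x ≤ Z x) → (∃ x, Z x ≠ A x) →
        slopeVec α (quotDimVec M A Z) ≤ slopeVec α (quotDimVec M A U) ∧
        (slopeVec α (quotDimVec M A Z) = slopeVec α (quotDimVec M A U) →
          ssum (quotDimVec M A Z) ≤ ssum (quotDimVec M A U))) :
    ∀ Z, IsSubrep M Z → (∀ x, U x ≤ Z x) → (∃ x, Z x ≠ U x) →
      slopeVec α (quotDimVec M U Z) < slopeVec α (quotDimVec M A U) := by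
  intro Z hZ hUZ hZne
  have hAZ : ∀ x, A x ≤ Z x := fun x => le_trans (hUle x) (hUZ x)
  have hsAU : 0 < ssum (quotDimVec M A U) := quot_ssum_pos hUle hUne
  have hsUZ : 0 < ssum (quotDimVec M U Z) := quot_ssum_pos hUZ hZne
  have hZneA : ∃ x, Z x ≠ A x := by
    obtain ⟨x, hx⟩ := hUne
    refine ⟨x, ne_of_finrank_lt ?_⟩
    have h1 : Module.finrank K (A x) < Module.finrank K (U x) :=
      Submodule.finrank_lt_finrank_of_lt (lt_of_le_of_ne (hUle x) (Ne.symm hx))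
    have h2 := Submodule.finrank_mono (hUZ x)
    omega
  set c := slopeVec α (quotDimVec M A U) with hc
  have hmaxZ := hmax Z hZ hAZ hZneA
  by_contra hcon
  push_neg at hcon
  have h1 : c * ssum (quotDimVec M U Z) ≤ wsum α (quotDimVec M U Z) :=
    (le_slopeVec_iff hsUZ).1 hcon
  have hU_eq : wsum α (quotDimVec M A U) = c * ssum (quotDimVec M A U) :=
    (slopeVec_eq_iff hsAU).1 rfl
  have hadd_w : wsum α (quotDimVec M A Z)
      = wsum α (quotDimVec M A U) + wsum α (quotDimVec M U Z) := by
    rw [← wsum_add]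
    exact wsum_congr α (quotDimVec_add M hUle hUZ)
  have hadd_s : ssum (quotDimVec M A Z)
      = ssum (quotDimVec M A U) + ssum (quotDimVec M U Z) := by
    rw [← ssum_add]
    exact ssum_congr (quotDimVec_add M hUle hUZ)
  have hsAZ : 0 < ssum (quotDimVec M A Z) := by rw [hadd_s]; linarith
  have h2 : wsum α (quotDimVec M A Z) ≤ c * ssum (quotDimVec M A Z) :=
    (slopeVec_le_iff hsAZ).1 hmaxZ.1
  have h3 : wsum α (quotDimVec M A Z) = c * ssum (quotDimVec M A Z) := by
    apply le_antisymm h2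
    rw [hadd_w, hadd_s, mul_add]
    linarith
  have h4 : slopeVec α (quotDimVec M A Z) = c := (slopeVec_eq_iff hsAZ).2 h3
  have h5 := hmaxZ.2 h4
  linarith

/-- A Harder–Narasimhan chain above `A`, with `ℕ`-indexing. -/
structure Chain (α : Q₀ → ℝ) (M : QRep Q₀ Q₁ σ τ K) (A : ∀ x, Submodule K (M.V x)) where
  n : ℕ
  npos : 0 < n
  W : ℕ → ∀ x, Submodule K (M.V x)
  w0 : W 0 = A
  wtop : ∀ x, W n x = ⊤
  sub : ∀ i, IsSubrep M (W i)
  mono : ∀ i, i < n → ∀ x, W i x ≤ W (i+1) x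
  proper : ∀ i, i < n → ∃ x, W i x ≠ W (i+1) x
  ss : ∀ i, i < n → SemistableQuot α M (W i) (W (i+1))
  dec : ∀ i j, i < j → j < n →
    slopeVec α (quotDimVec M (W j) (W (j+1))) < slopeVec α (quotDimVec M (W i) (W (i+1)))

lemma chain_exists (α : Q₀ → ℝ) (M : QRep Q₀ Q₁ σ τ K) :
    ∀ (Nb : ℕ) (A : ∀ x, Submodule K (M.V x)), IsSubrep M A → (∃ x, A x ≠ ⊤) →
      codim M A ≤ Nb → Nonempty (Chain α M A) := by
  intro Nb
  induction Nb with
  | zero =>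
    intro A hA hAt hcd
    exfalso
    obtain ⟨x, hx⟩ := hAt
    have h0 : ∀ y ∈ Finset.univ, Module.finrank K (M.V y) - Module.finrank K (A y) = 0 := by
      rw [← Finset.sum_eq_zero_iff]
      exact Nat.le_zero.1 hcd
    have h1 := h0 x (Finset.mem_univ x)
    have h2 : Module.finrank K (A x) ≤ Module.finrank K (M.V x) := Submodule.finrank_le _
    exact hx (Submodule.eq_top_of_finrank_eq (by omega))
  | succ Nb ih =>
    intro A hA hAt hcd
    obtain ⟨U, hU1, hU2, hU3, hUmax⟩ := exists_maximizer α M A hA hAt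
    by_cases hUtop : ∀ x, U x = ⊤
    · set W' : ℕ → ∀ x, Submodule K (M.V x) := fun i => if i = 0 then A else U with hW'
      have e0 : W' 0 = A := rfl
      have e1 : W' 1 = U := rfl
      refine ⟨⟨1, Nat.one_pos, W', e0, fun x => by rw [e1, hUtop x], ?_, ?_, ?_, ?_, ?_⟩⟩
      · intro i
        simp only [hW']
        split_ifs
        · exact hA
        · exact hU1
      · intro i hi x
        interval_cases i
        rw [e0, e1]
        exact hU2 x
      · intro i hi
        interval_cases i
        rw [e0, e1]
        obtain ⟨x, hx⟩ := hU3
        exact ⟨x, Ne.symm hx⟩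
      · intro i hi
        interval_cases i
        rw [e0, e1]
        intro Z hZ h1 h2 h3
        exact (hUmax Z hZ h1 h3).1
      · intro i j hij hj
        omega
    · push_neg at hUtop
      have hcodim : codim M U < codim M A := by
        obtain ⟨x₀, hx₀⟩ := hU3
        apply Finset.sum_lt_sum
        · intro x _
          have := Submodule.finrank_mono (hU2 x)
          omega
        · refine ⟨x₀, Finset.mem_univ x₀, ?_⟩
          have h1 : Module.finrank K (A x₀) < Module.finrank K (U x₀) :=
            Submodule.finrank_lt_finrank_of_lt (lt_of_le_of_ne (hU2 x₀) (Ne.symm hx₀))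
          have h2 : Module.finrank K (U x₀) ≤ Module.finrank K (M.V x₀) :=
            Submodule.finrank_le _
          omega
      obtain ⟨C⟩ := ih U hU1 hUtop (by omega)
      set W' : ℕ → ∀ x, Submodule K (M.V x) := fun i => if i = 0 then A else C.W (i-1)
        with hW'
      have e0 : W' 0 = A := rfl
      have eS : ∀ i, W' (i+1) = C.W i := fun i => by
        simp only [hW', Nat.succ_ne_zero, if_false, Nat.add_sub_cancel]
      have hstep : ∀ k, k < C.n →
          slopeVec α (quotDimVec M (C.W k) (C.W (k+1))) < slopeVec α (quotDimVec M A U) := by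
        intro k hk
        have h0 : slopeVec α (quotDimVec M (C.W 0) (C.W 1)) < slopeVec α (quotDimVec M A U) := by
          have := maximizer_step α M hU2 hU3 hUmax (C.W 1) (C.sub 1)
            (fun x => by have := C.mono 0 C.npos x; rwa [C.w0] at this)
            (by obtain ⟨x, hx⟩ := C.proper 0 C.npos; rw [C.w0] at hx
                exact ⟨x, Ne.symm hx⟩)
          rwa [C.w0]
        rcases Nat.eq_zero_or_pos k with hk0 | hk0
        · rw [hk0]; exact h0
        · exact lt_trans (C.dec 0 k hk0 hk) h0
      refine ⟨⟨C.n + 1, Nat.succ_pos _, W', e0, ?_, ?_, ?_, ?_, ?_, ?_⟩⟩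
      · intro x
        rw [eS C.n]
        exact C.wtop x
      · intro i
        cases i with
        | zero => rw [e0]; exact hA
        | succ i => rw [eS i]; exact C.sub i
      · intro i hi x
        cases i with
        | zero => rw [e0, eS 0, C.w0]; exact hU2 x
        | succ i => rw [eS i, eS (i+1)]; exact C.mono i (by omega) x
      · intro i hi
        cases i with
        | zero =>
          rw [e0, eS 0, C.w0]
          obtain ⟨x, hx⟩ := hU3
          exact ⟨x, Ne.symm hx⟩
        | succ i => rw [eS i, eS (i+1)]; exact C.proper i (by omega)
      · intro i hi
        cases i with
        | zero =>
          rw [e0, eS 0, C.w0]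
          intro Z hZ h1 h2 h3
          exact (hUmax Z hZ h1 h3).1
        | succ i => rw [eS i, eS (i+1)]; exact C.ss i (by omega)
      · intro i j hij hj
        cases j with
        | zero => omega
        | succ j =>
          rw [eS j, eS (j+1)]
          cases i with
          | zero =>
            rw [e0, eS 0, C.w0]
            exact hstep j (by omega)
          | succ i =>
            rw [eS i, eS (i+1)]
            exact C.dec i j (by omega) (by omega)

end QRep
namespace QRep

open Module Submodule

variable {Q₀ Q₁ : Type} {σ τ : Q₁ → Q₀} {K : Type} [Field K] [Fintype Q₀]
variable {M : QRep Q₀ Q₁ σ τ K}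

lemma chain_mono_le {α : Q₀ → ℝ} {A : ∀ x, Submodule K (M.V x)} (C : Chain α M A) :
    ∀ j i, i ≤ j → j ≤ C.n → ∀ x, C.W i x ≤ C.W j x := by
  intro j
  induction j with
  | zero => intro i hi _ x; interval_cases i; exact le_refl _
  | succ j ih =>
    intro i hi hj x
    rcases Nat.eq_or_lt_of_le hi with h | h
    · rw [h]
    · exact le_trans (ih i (by omega) (by omega) x) (C.mono j (by omega) x)

/-- Build an `HNFiltration` from `ℕ`-indexed data. -/
def mkFilt (α : Q₀ → ℝ) (M : QRep Q₀ Q₁ σ τ K) (n : ℕ)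
    (W : ℕ → ∀ x, Submodule K (M.V x))
    (hbot : ∀ x, W 0 x = ⊥) (htop : ∀ x, W n x = ⊤)
    (hsub : ∀ i, IsSubrep M (W i))
    (hmono : ∀ i, i < n → ∀ x, W i x ≤ W (i+1) x)
    (hproper : ∀ i, i < n → ∃ x, W i x ≠ W (i+1) x)
    (hss : ∀ i, i < n → SemistableQuot α M (W i) (W (i+1)))
    (hdec : ∀ i j, i < j → j < n →
      slopeVec α (quotDimVec M (W j) (W (j+1))) < slopeVec α (quotDimVec M (W i) (W (i+1)))) :
    HNFiltration α M where
  n := n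
  W := fun i => W i.val
  subrep i := hsub i.val
  bot := hbot
  top := by simpa [Fin.val_last] using htop
  mono i x := by simpa [Fin.coe_castSucc, Fin.val_succ] using hmono i.val i.isLt x
  proper i := by simpa [Fin.coe_castSucc, Fin.val_succ] using hproper i.val i.isLt
  ss i := by simpa [Fin.coe_castSucc, Fin.val_succ] using hss i.val i.isLt
  dec i j hij := by
    simpa [Fin.coe_castSucc, Fin.val_succ] using hdec i.val j.val hij j.isLt

lemma mkFilt_typeFun (α : Q₀ → ℝ) (M : QRep Q₀ Q₁ σ τ K) (n : ℕ)
    (W : ℕ → ∀ x, Submodule K (M.V x)) (hbot) (htop) (hsub) (hmono) (hproper) (hss) (hdec) :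
    (mkFilt α M n W hbot htop hsub hmono hproper hss hdec).typeFun = fun lam x =>
      ∑ i ∈ Finset.range n,
        if slopeVec α (quotDimVec M (W i) (W (i+1))) = lam then
          quotDimVec M (W i) (W (i+1)) x else 0 := by
  funext lam x
  show (∑ i : Fin n, _) = _
  rw [← Fin.sum_univ_eq_sum_range (fun k =>
    if slopeVec α (quotDimVec M (W k) (W (k+1))) = lam then
      quotDimVec M (W k) (W (k+1)) x else 0) n]
  apply Finset.sum_congr rfl
  intro i _
  simp [mkFilt, HNFiltration.typeFun, Fin.coe_castSucc, Fin.val_succ]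
  exact if_congr Iff.rfl rfl rfl

/-! ### Transfer lemmas between `M`, `subrep`, `quotRep`, and `prodRep` -/

variable (U : ∀ x, Submodule K (M.V x)) (hU : IsSubrep M U)

lemma isSubrep_comap_mkQ (R : ∀ x, Submodule K ((quotRep M U hU).V x))
    (hR : IsSubrep (quotRep M U hU) R) :
    IsSubrep M (fun x => (R x).comap (U x).mkQ) := by
  intro e
  rintro v ⟨w, hw, rfl⟩
  have h1 : (U (σ e)).mkQ w ∈ R (σ e) := hw
  have h2 := hR e ⟨(U (σ e)).mkQ w, h1, rfl⟩
  have h3 : (quotRep M U hU).f e ((U (σ e)).mkQ w) = (U (τ e)).mkQ (M.f e w) := by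
    simp [quotRep, Submodule.mkQ_apply, Submodule.mapQ_apply]
    rfl
  rw [h3] at h2
  exact h2

lemma isSubrep_map_snd {B : QRep Q₀ Q₁ σ τ K} {A : QRep Q₀ Q₁ σ τ K}
    (Z : ∀ x, Submodule K ((prodRep A B).V x)) (hZ : IsSubrep (prodRep A B) Z) :
    IsSubrep B (fun x => (Z x).map (LinearMap.snd K (A.V x) (B.V x))) := by
  intro e
  rintro v ⟨b, ⟨z, hz, rfl⟩, rfl⟩
  exact ⟨(prodRep A B).f e z, hZ e ⟨z, hz, rfl⟩, rfl⟩

lemma isSubrep_inl_subtype {B : QRep Q₀ Q₁ σ τ K}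
    (Z : ∀ x, Submodule K ((prodRep (subrep M U hU) B).V x))
    (hZ : IsSubrep (prodRep (subrep M U hU) B) Z) :
    IsSubrep M (fun x =>
      ((Z x).comap (LinearMap.inl K ((subrep M U hU).V x) (B.V x))).map (U x).subtype) := by
  intro e
  rintro v ⟨w, hw, rfl⟩
  obtain ⟨u, hu, rfl⟩ := hw
  have h2 := hZ e ⟨LinearMap.inl K _ _ u, hu, rfl⟩
  have h3 : (prodRep (subrep M U hU) B).f e (LinearMap.inl K _ _ u)
      = LinearMap.inl K _ _ ((subrep M U hU).f e u) := by
    simp [prodRep, LinearMap.prodMap_apply]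
    exact Prod.ext rfl (map_zero (B.f e))
  rw [h3] at h2
  refine ⟨(subrep M U hU).f e u, h2, ?_⟩
  simp [subrep, LinearMap.restrict_apply]
  rfl

/-! ### Dimension vector lemmas -/

lemma dimVec_subrep (x : Q₀) : dimVec (subrep M U hU) x = finrank K (U x) := rfl

lemma dimVec_quotRep (x : Q₀) :
    dimVec (quotRep M U hU) x = finrank K (M.V x) - finrank K (U x) := by
  have h1 := Submodule.finrank_quotient_add_finrank (U x)
  have h2 : dimVec (quotRep M U hU) x = finrank K (M.V x ⧸ U x) := rfl
  rw [h2]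
  omega

lemma dimVec_prodRep (A B : QRep Q₀ Q₁ σ τ K) (x : Q₀) :
    dimVec (prodRep A B) x = dimVec A x + dimVec B x := by
  unfold dimVec prodRep
  exact Module.finrank_prod

lemma dimVec_prod_sub_quot :
    dimVec (prodRep (subrep M U hU) (quotRep M U hU)) = dimVec M := by
  funext x
  rw [dimVec_prodRep, dimVec_subrep, dimVec_quotRep]
  have : finrank K (U x) ≤ finrank K (M.V x) := Submodule.finrank_le _
  unfold dimVec
  omega

lemma nonzero_subrep (h : ∃ x, U x ≠ ⊥) : Nonzero (subrep M U hU) := by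
  obtain ⟨x, hx⟩ := h
  refine ⟨x, ?_⟩
  rw [dimVec_subrep]
  exact fun h0 => hx (Submodule.finrank_eq_zero.1 h0)

lemma nonzero_quotRep (h : ∃ x, U x ≠ ⊤) : Nonzero (quotRep M U hU) := by
  obtain ⟨x, hx⟩ := h
  refine ⟨x, ?_⟩
  rw [dimVec_quotRep]
  have h1 : finrank K (U x) < finrank K (M.V x) := by
    have := Submodule.finrank_lt_finrank_of_lt (lt_of_le_of_ne le_top hx)
    rwa [finrank_top] at this
  omega

/-! ### One-step filtration of a semistable representation -/

lemma bot_ne_top_of_nonzero (hnz : Nonzero M) :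
    ∃ x, (⊥ : Submodule K (M.V x)) ≠ ⊤ := by
  obtain ⟨x, hx⟩ := hnz
  refine ⟨x, fun h => hx ?_⟩
  have : finrank K (M.V x) = 0 := by
    rw [← finrank_top K (M.V x), ← h, finrank_bot]
  exact this

def oneStep (α : Q₀ → ℝ) (M : QRep Q₀ Q₁ σ τ K) (hnz : Nonzero M)
    (hss : ∀ Z, IsSubrep M Z → (∃ x, Z x ≠ ⊥) → slopeVec α (dimVecOf M Z) ≤ slope α M) :
    HNFiltration α M :=
  mkFilt α M 1 (fun i => if i = 0 then (fun _ => ⊥) else (fun _ => ⊤))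
    (fun x => rfl) (fun x => rfl)
    (by intro i; split_ifs; exacts [isSubrep_bot M, isSubrep_top M])
    (by intro i hi x; interval_cases i; exact bot_le)
    (by intro i hi; interval_cases i; exact bot_ne_top_of_nonzero hnz)
    (by
      intro i hi
      interval_cases i
      intro Z hZ h1 h2 h3
      show slopeVec α (quotDimVec M (fun _ => ⊥) Z)
        ≤ slopeVec α (quotDimVec M (fun _ => ⊥) (fun _ => ⊤))
      rw [quotDimVec_bot, quotDimVec_bot_top]
      exact hss Z hZ h3)
    (by intro i j hij hj; omega)

lemma oneStep_typeFun (α : Q₀ → ℝ) (M : QRep Q₀ Q₁ σ τ K) (hnz) (hss) :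
    (oneStep α M hnz hss).typeFun = fun lam x =>
      if slope α M = lam then dimVec M x else 0 := by
  rw [oneStep, mkFilt_typeFun]
  funext lam x
  rw [Finset.sum_range_one]
  show (if slopeVec α (quotDimVec M (fun _ => ⊥) (fun _ => ⊤)) = lam then
    quotDimVec M (fun _ => ⊥) (fun _ => ⊤) x else 0) = _
  rw [quotDimVec_bot_top]
  rfl

end QRep
namespace QRep

open Module Submodule

variable {Q₀ Q₁ : Type} {σ τ : Q₁ → Q₀} {K : Type} [Field K] [Fintype Q₀]
variable {M : QRep Q₀ Q₁ σ τ K}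

lemma dimVecOf_ne_zero {Z : ∀ x, Submodule K (M.V x)} {x : Q₀} (h : Z x ≠ ⊥) :
    dimVecOf M Z x ≠ 0 := fun h0 => h (Submodule.finrank_eq_zero.1 h0)

lemma ssum_dimVecOf_pos {Z : ∀ x, Submodule K (M.V x)} (h : ∃ x, Z x ≠ ⊥) :
    0 < ssum (dimVecOf M Z) := by
  obtain ⟨x, hx⟩ := h
  exact ssum_pos _ ⟨x, dimVecOf_ne_zero hx⟩

lemma wsum_le_of_semistable (α : Q₀ → ℝ) {c : ℝ}
    (hss : ∀ Z, IsSubrep M Z → (∃ x, Z x ≠ ⊥) → slopeVec α (dimVecOf M Z) ≤ c) :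
    ∀ Z, IsSubrep M Z → wsum α (dimVecOf M Z) ≤ c * ssum (dimVecOf M Z) := by
  intro Z hZ
  by_cases h : ∃ x, Z x ≠ ⊥
  · exact (slopeVec_le_iff (ssum_dimVecOf_pos h)).1 (hss Z hZ h)
  · push_neg at h
    have hz : ∀ x, dimVecOf M Z x = 0 := fun x => by
      simp [dimVecOf, h x, finrank_bot]
    rw [wsum_eq_zero α _ hz, ssum_eq_zero _ hz, mul_zero]

/-- Core of Case 2: every subrepresentation of `U ⊕ M/U` satisfies the slope bound,
provided `U` has slope exactly `c` and `M` is `c`-semistable. -/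
lemma prod_ss (α : Q₀ → ℝ) (M : QRep Q₀ Q₁ σ τ K)
    (U : ∀ x, Submodule K (M.V x)) (hU : IsSubrep M U) (c : ℝ)
    (hUslope : wsum α (dimVecOf M U) = c * ssum (dimVecOf M U))
    (hssM : ∀ Z, IsSubrep M Z → wsum α (dimVecOf M Z) ≤ c * ssum (dimVecOf M Z)) :
    ∀ Z, IsSubrep (prodRep (subrep M U hU) (quotRep M U hU)) Z →
      wsum α (fun x => finrank K (Z x)) ≤ c * ssum (fun x => finrank K (Z x)) := by
  intro Z hZ
  let A := subrep M U hU
  let B := quotRep M U hU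
  let P' : ∀ x, Submodule K (M.V x) :=
    fun x => ((Z x).comap (LinearMap.inl K (A.V x) (B.V x))).map (U x).subtype
  let R : ∀ x, Submodule K (B.V x) :=
    fun x => (Z x).map (LinearMap.snd K (A.V x) (B.V x))
  let Z' : ∀ x, Submodule K (M.V x) := fun x => (R x).comap (U x).mkQ
  have hP'sub : IsSubrep M P' := isSubrep_inl_subtype U hU Z hZ
  have hZ'sub : IsSubrep M Z' := isSubrep_comap_mkQ U hU R (isSubrep_map_snd Z hZ)
  have hdim : ∀ x, finrank K (Z x) = finrank K (P' x) + finrank K (R x) := by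
    intro x
    have h1 : finrank K (Z x)
        = finrank K ((Z x).comap (LinearMap.inl K (A.V x) (B.V x)))
          + finrank K ((Z x).map (LinearMap.snd K (A.V x) (B.V x))) :=
      finrank_decomp_prod (Z x)
    have h2 : finrank K ((Z x).comap (LinearMap.inl K (A.V x) (B.V x))) = finrank K (P' x) :=
      (Submodule.finrank_map_subtype_eq (U x) _).symm
    have h3 : finrank K (R x) = finrank K ((Z x).map (LinearMap.snd K (A.V x) (B.V x))) := rfl
    omega
  have hdZ' : ∀ x, finrank K (Z' x) = finrank K (R x) + finrank K (U x) :=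
    fun x => finrank_comap_mkQ (U x) (R x)
  have e1 : wsum α (fun x => finrank K (Z x))
      = wsum α (dimVecOf M P') + wsum α (fun x => finrank K (R x)) := by
    rw [← wsum_add]; exact wsum_congr α hdim
  have s1 : ssum (fun x => finrank K (Z x))
      = ssum (dimVecOf M P') + ssum (fun x => finrank K (R x)) := by
    rw [← ssum_add]; exact ssum_congr hdim
  have e2 : wsum α (dimVecOf M Z')
      = wsum α (fun x => finrank K (R x)) + wsum α (dimVecOf M U) := by
    rw [← wsum_add]; exact wsum_congr α hdZ'
  have s2 : ssum (dimVecOf M Z')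
      = ssum (fun x => finrank K (R x)) + ssum (dimVecOf M U) := by
    rw [← ssum_add]; exact ssum_congr hdZ'
  have h3 := hssM P' hP'sub
  have h4 := hssM Z' hZ'sub
  have s1' : c * ssum (fun x => finrank K (Z x))
      = c * ssum (dimVecOf M P') + c * ssum (fun x => finrank K (R x)) := by
    rw [s1]; ring
  have s2' : c * ssum (dimVecOf M Z')
      = c * ssum (fun x => finrank K (R x)) + c * ssum (dimVecOf M U) := by
    rw [s2]; ring
  linarith

/-- Case 2: a semistable, non-stable indecomposable leads to a decomposition with
the same HN type. -/
lemma case2 (α : Q₀ → ℝ) (M : QRep Q₀ Q₁ σ τ K) (hMnz : Nonzero M)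
    (U : ∀ x, Submodule K (M.V x)) (hU : IsSubrep M U)
    (hUnz : ∃ x, U x ≠ ⊥) (hUpr : ∃ x, U x ≠ ⊤)
    (hUslope : slopeVec α (dimVecOf M U) = slope α M)
    (hss : ∀ Z, IsSubrep M Z → (∃ x, Z x ≠ ⊥) → slopeVec α (dimVecOf M Z) ≤ slope α M) :
    ∃ A B : QRep Q₀ Q₁ σ τ K, Nonzero A ∧ Nonzero B ∧ SameHNType α M (prodRep A B) := by
  set c := slope α M with hc
  set A := subrep M U hU with hA
  set B := quotRep M U hU with hB
  set N := prodRep A B with hN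
  have hdimN : dimVec N = dimVec M := dimVec_prod_sub_quot U hU
  have hNnz : Nonzero N := by
    obtain ⟨x, hx⟩ := hMnz
    exact ⟨x, by rw [hdimN]; exact hx⟩
  have hslopeN : slope α N = c := by
    rw [hc, slope, slope, hdimN]
  have hUw : wsum α (dimVecOf M U) = c * ssum (dimVecOf M U) :=
    (slopeVec_eq_iff (ssum_dimVecOf_pos hUnz)).1 hUslope
  have hcore := prod_ss α M U hU c hUw (wsum_le_of_semistable α hss)
  have hssN : ∀ Z, IsSubrep N Z → (∃ x, Z x ≠ ⊥) → slopeVec α (dimVecOf N Z) ≤ slope α N := by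
    intro Z hZ hZnz
    rw [hslopeN]
    have hs : 0 < ssum (dimVecOf N Z) := ssum_dimVecOf_pos hZnz
    exact (slopeVec_le_iff hs).2 (hcore Z hZ)
  refine ⟨A, B, nonzero_subrep U hU hUnz, nonzero_quotRep U hU hUpr,
    oneStep α M hMnz hss, oneStep α N hNnz hssN, ?_⟩
  rw [oneStep_typeFun, oneStep_typeFun, hslopeN, hdimN]

end QRep
namespace QRep

open Module Submodule

variable {Q₀ Q₁ : Type} {σ τ : Q₁ → Q₀} {K : Type} [Field K] [Fintype Q₀]
variable {M : QRep Q₀ Q₁ σ τ K}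

lemma case1 (α : Q₀ → ℝ) (M : QRep Q₀ Q₁ σ τ K)
    (C : Chain α M (fun _ => ⊥)) (hn2 : 2 ≤ C.n) :
    ∃ A B : QRep Q₀ Q₁ σ τ K, Nonzero A ∧ Nonzero B ∧ SameHNType α M (prodRep A B) := by
  classical
  set U := C.W 1 with hUdef
  have hU : IsSubrep M U := C.sub 1
  have cw0 : ∀ x, C.W 0 x = ⊥ := fun x => congrFun C.w0 x
  have hUle : ∀ j, 1 ≤ j → j ≤ C.n → ∀ x, U x ≤ C.W j x :=
    fun j h1 h2 x => chain_mono_le C j 1 h1 h2 x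
  have hUnz : ∃ x, U x ≠ ⊥ := by
    obtain ⟨x, hx⟩ := C.proper 0 (by omega)
    refine ⟨x, fun h => hx ?_⟩
    rw [cw0 x, show C.W (0+1) = U from rfl, h]
  have hUpr : ∃ x, U x ≠ ⊤ := by
    obtain ⟨x, hx⟩ := C.proper 1 (by omega)
    refine ⟨x, fun h => hx ?_⟩
    have h1 : U x ≤ C.W 2 x := hUle 2 (by omega) (by omega) x
    exact le_antisymm h1 (le_trans le_top (le_of_eq h.symm))
  let A := subrep M U hU
  let B := quotRep M U hU
  let N := prodRep A B
  -- the image filtration in the quotient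
  let VV : ℕ → ∀ x, Submodule K (B.V x) := fun j x => (C.W j x).map (U x).mkQ
  let GW : ℕ → ∀ x, Submodule K (N.V x) := fun j x =>
    if j = 0 then ⊥ else ((⊤ : Submodule K (A.V x)).prod (VV j x))
  have hGW0 : ∀ x, GW 0 x = ⊥ := fun x => rfl
  have hGWj : ∀ j, j ≠ 0 → ∀ x, GW j x = (⊤ : Submodule K (A.V x)).prod (VV j x) := by
    intro j hj x
    exact if_neg hj
  have htopA : ∀ x, finrank K (⊤ : Submodule K (A.V x)) = finrank K (U x) := by
    intro x
    rw [finrank_top]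
    rfl
  have hVcomap : ∀ j, 1 ≤ j → j ≤ C.n → ∀ x, (VV j x).comap (U x).mkQ = C.W j x :=
    fun j h1 h2 x => comap_map_mkQ _ _ (hUle j h1 h2 x)
  have frVV : ∀ j, 1 ≤ j → j ≤ C.n → ∀ x,
      finrank K (VV j x) + finrank K (U x) = finrank K (C.W j x) :=
    fun j h1 h2 x => finrank_map_mkQ_add (U x) (C.W j x) (hUle j h1 h2 x)
  have frGW : ∀ j, j ≤ C.n → ∀ x, finrank K (GW j x) = finrank K (C.W j x) := by
    intro j hj x
    rcases Nat.eq_zero_or_pos j with h0 | h0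
    · subst h0
      rw [hGW0 x, cw0 x]
      simp [finrank_bot]
    · have hb : finrank K ((⊤ : Submodule K (A.V x)).prod (VV j x)) = finrank K (C.W j x) := by
        rw [finrank_prod_submodule, htopA x]
        have := frVV j h0 hj x
        omega
      rw [hGWj j (by omega) x]
      exact hb
  have qdG : ∀ i, i < C.n →
      quotDimVec N (GW i) (GW (i+1)) = quotDimVec M (C.W i) (C.W (i+1)) := by
    intro i hi
    funext x
    unfold quotDimVec
    rw [frGW i (by omega) x, frGW (i+1) (by omega) x]
  have hVV1 : ∀ x, VV 1 x = ⊥ := by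
    intro x
    rw [eq_bot_iff]
    rintro b ⟨w, hw, rfl⟩
    rw [Submodule.mem_bot]
    exact (Submodule.Quotient.mk_eq_zero _).mpr hw
  -- subrepresentation property of the filtration steps in N
  have hGWsub : ∀ j, IsSubrep N (GW j) := by
    intro j
    rcases Nat.eq_zero_or_pos j with h0 | h0
    · subst h0
      have : GW 0 = fun _ => (⊥ : Submodule K (N.V _)) := funext hGW0
      rw [this]
      exact isSubrep_bot N
    · intro e
      rintro v ⟨z, hz, rfl⟩
      rw [hGWj j (by omega)] at hz
      obtain ⟨-, h2⟩ := Submodule.mem_prod.mp hz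
      obtain ⟨w, hw, hmk⟩ := h2
      rw [hGWj j (by omega)]
      have he : (N.f e z).2 = B.f e z.2 := rfl
      have hB : B.f e ((U (σ e)).mkQ w) = (U (τ e)).mkQ (M.f e w) := by
        simp [B, quotRep, Submodule.mkQ_apply, Submodule.mapQ_apply]
        rfl
      have hgoal : (N.f e z).2 = (U (τ e)).mkQ (M.f e w) := by
        rw [he, ← hmk]
        exact hB
      exact Submodule.mem_prod.mpr
        ⟨trivial, ⟨M.f e w, C.sub j e ⟨w, hw, rfl⟩, hgoal.symm⟩⟩
  have hGWtop : ∀ x, GW C.n x = ⊤ := by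
    intro x
    rw [hGWj C.n (by omega)]
    have h1 : VV C.n x = ⊤ := by
      show (C.W C.n x).map (U x).mkQ = ⊤
      rw [C.wtop x, Submodule.map_top, Submodule.range_mkQ]
    rw [h1]
    exact Submodule.prod_top
  have hGWmono : ∀ j, j < C.n → ∀ x, GW j x ≤ GW (j+1) x := by
    intro j hj x
    rcases Nat.eq_zero_or_pos j with h0 | h0
    · subst h0; rw [hGW0 x]; exact bot_le
    · rw [hGWj j (by omega), hGWj (j+1) (by omega)]
      intro z hz
      obtain ⟨h1, h2⟩ := Submodule.mem_prod.mp hz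
      exact Submodule.mem_prod.mpr ⟨trivial, Submodule.map_mono (C.mono j hj x) h2⟩
  have hGWproper : ∀ j, j < C.n → ∃ x, GW j x ≠ GW (j+1) x := by
    intro j hj
    obtain ⟨x, hx⟩ := C.proper j hj
    refine ⟨x, fun h => hx ?_⟩
    have h1 : finrank K (C.W j x) = finrank K (C.W (j+1) x) := by
      rw [← frGW j (by omega) x, ← frGW (j+1) (by omega) x, h]
    have h2 : C.W j x ≤ C.W (j+1) x := C.mono j hj x
    exact Submodule.eq_of_le_of_finrank_le h2 (le_of_eq h1.symm)
  have hGWss : ∀ i, i < C.n → SemistableQuot α N (GW i) (GW (i+1)) := by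
    intro i hi Z hZN hle1 hle2 hne
    rcases Nat.eq_zero_or_pos i with h0 | h0
    · -- first step: Z lives in U ⊕ 0
      subst h0
      have hsndbot : ∀ x, (Z x).map (LinearMap.snd K (A.V x) (B.V x)) = ⊥ := by
        intro x
        rw [eq_bot_iff]
        rintro b ⟨z, hz, rfl⟩
        have h1 := hle2 x hz
        rw [hGWj 1 one_ne_zero x] at h1
        have hb := (Submodule.mem_prod.mp h1).2
        rw [hVV1 x] at hb
        exact hb
      let P' : ∀ x, Submodule K (M.V x) :=
        fun x => ((Z x).comap (LinearMap.inl K (A.V x) (B.V x))).map (U x).subtype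
      have hP'sub : IsSubrep M P' := isSubrep_inl_subtype U hU Z hZN
      have frP' : ∀ x, finrank K (Z x) = finrank K (P' x) := by
        intro x
        have h1 : finrank K (Z x)
            = finrank K ((Z x).comap (LinearMap.inl K (A.V x) (B.V x)))
              + finrank K ((Z x).map (LinearMap.snd K (A.V x) (B.V x))) :=
          finrank_decomp_prod (Z x)
        have h2 : finrank K ((Z x).comap (LinearMap.inl K (A.V x) (B.V x)))
            = finrank K (P' x) :=
          (Submodule.finrank_map_subtype_eq (U x) _).symm
        have h3 : finrank K ((Z x).map (LinearMap.snd K (A.V x) (B.V x))) = 0 := by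
          rw [hsndbot x, finrank_bot]
        omega
      have hP'le : ∀ x, P' x ≤ C.W 1 x := fun x => Submodule.map_subtype_le _ _
      have hP'ge : ∀ x, C.W 0 x ≤ P' x := by
        intro x
        rw [cw0 x]
        exact bot_le
      have hP'ne : ∃ x, P' x ≠ C.W 0 x := by
        obtain ⟨x, hx⟩ := hne
        refine ⟨x, fun h => hx ?_⟩
        rw [hGW0 x, ← Submodule.finrank_eq_zero, frP' x, h, cw0 x, finrank_bot]
      have hres := C.ss 0 (by omega) P' hP'sub hP'ge hP'le hP'ne
      have hqd : quotDimVec N (GW 0) Z = quotDimVec M (C.W 0) P' := by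
        funext x
        unfold quotDimVec
        rw [hGW0 x, cw0 x, frP' x]
        simp [finrank_bot]
      rw [hqd, qdG 0 (by omega)]
      exact hres
    · -- later steps: Z = ⊤ × R
      have hprodbot : ∀ x, (⊤ : Submodule K (A.V x)).prod (⊥ : Submodule K (B.V x)) ≤ Z x := by
        intro x
        refine le_trans ?_ (hle1 x)
        rw [hGWj i (by omega) x]
        intro z hz
        obtain ⟨h1, h2⟩ := Submodule.mem_prod.mp hz
        rw [Submodule.mem_bot] at h2
        refine Submodule.mem_prod.mpr ⟨trivial, ?_⟩
        rw [h2]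
        exact (VV i x).zero_mem
      let R : ∀ x, Submodule K (B.V x) :=
        fun x => (Z x).map (LinearMap.snd K (A.V x) (B.V x))
      have hZeq : ∀ x, Z x = (⊤ : Submodule K (A.V x)).prod (R x) :=
        fun x => submodule_eq_top_prod (Z x) (hprodbot x)
      have hRle : ∀ x, R x ≤ VV (i+1) x := by
        intro x
        have h1 : R x ≤ (GW (i+1) x).map (LinearMap.snd K (A.V x) (B.V x)) :=
          Submodule.map_mono (hle2 x)
        have h2 : (GW (i+1) x).map (LinearMap.snd K (A.V x) (B.V x)) = VV (i+1) x := by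
          rw [hGWj (i+1) (by omega) x]
          exact map_snd_prod _ _
        rwa [h2] at h1
      have hRge : ∀ x, VV i x ≤ R x := by
        intro x
        have h1 : (GW i x).map (LinearMap.snd K (A.V x) (B.V x)) ≤ R x :=
          Submodule.map_mono (hle1 x)
        have h2 : (GW i x).map (LinearMap.snd K (A.V x) (B.V x)) = VV i x := by
          rw [hGWj i (by omega) x]
          exact map_snd_prod _ _
        rwa [h2] at h1
      let Z' : ∀ x, Submodule K (M.V x) := fun x => (R x).comap (U x).mkQ
      have hZ'sub : IsSubrep M Z' := isSubrep_comap_mkQ U hU R (isSubrep_map_snd Z hZN)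
      have hZ'ge : ∀ x, C.W i x ≤ Z' x := by
        intro x
        rw [← hVcomap i (by omega) (by omega) x]
        exact Submodule.comap_mono (hRge x)
      have hZ'le : ∀ x, Z' x ≤ C.W (i+1) x := by
        intro x
        rw [← hVcomap (i+1) (by omega) (by omega) x]
        exact Submodule.comap_mono (hRle x)
      have frZ : ∀ x, finrank K (Z x) = finrank K (U x) + finrank K (R x) := by
        intro x
        have hb : finrank K ((⊤ : Submodule K (A.V x)).prod (R x))
            = finrank K (U x) + finrank K (R x) := by
          rw [finrank_prod_submodule, htopA x]
        rw [hZeq x]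
        exact hb
      have frZ' : ∀ x, finrank K (Z' x) = finrank K (R x) + finrank K (U x) :=
        fun x => finrank_comap_mkQ (U x) (R x)
      have hZ'ne : ∃ x, Z' x ≠ C.W i x := by
        obtain ⟨x, hx⟩ := hne
        refine ⟨x, ne_of_finrank_lt ?_⟩
        have h1 : finrank K (GW i x) < finrank K (Z x) :=
          Submodule.finrank_lt_finrank_of_lt (lt_of_le_of_ne (hle1 x) (Ne.symm hx))
        have h2 := frGW i (by omega) x
        have h3 := frVV i (by omega) (by omega) x
        have h4 := frZ x
        have h5 := frZ' x
        omega
      have hres := C.ss i hi Z' hZ'sub hZ'ge hZ'le hZ'ne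
      have hqd : quotDimVec N (GW i) Z = quotDimVec M (C.W i) Z' := by
        funext x
        unfold quotDimVec
        have h2 := frGW i (by omega) x
        have h3 := frVV i (by omega) (by omega) x
        have h4 := frZ x
        have h5 := frZ' x
        omega
      rw [hqd, qdG i hi]
      exact hres
  have hGWdec : ∀ i j, i < j → j < C.n →
      slopeVec α (quotDimVec N (GW j) (GW (j+1)))
        < slopeVec α (quotDimVec N (GW i) (GW (i+1))) := by
    intro i j hij hj
    rw [qdG i (by omega), qdG j (by omega)]
    exact C.dec i j hij hj
  -- assemble
  refine ⟨A, B, nonzero_subrep U hU hUnz, nonzero_quotRep U hU hUpr, ?_⟩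
  refine ⟨mkFilt α M C.n C.W cw0 C.wtop C.sub C.mono C.proper C.ss C.dec,
    mkFilt α N C.n GW hGW0 hGWtop hGWsub hGWmono hGWproper hGWss hGWdec, ?_⟩
  rw [mkFilt_typeFun, mkFilt_typeFun]
  funext lam x
  apply Finset.sum_congr rfl
  intro i hi
  rw [Finset.mem_range] at hi
  rw [qdG i hi]

end QRep
/-- If `α` is a complete central charge for a finite acyclic quiver `Q` (equality of
Harder–Narasimhan types along `α` implies isomorphism), then every indecomposable
representation in `Rep(Q)` is `α`-stable. -/
theorem complete_implies_indecomposable_stable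
    {Q₀ Q₁ : Type} [Fintype Q₀] [Fintype Q₁] {σ τ : Q₁ → Q₀}
    {K : Type} [Field K] (hQ : QuiverAcyclic σ τ) (α : Q₀ → ℝ)
    (hα : QRep.Complete (Q₁ := Q₁) (σ := σ) (τ := τ) (K := K) α) :
    ∀ M : QRep Q₀ Q₁ σ τ K, QRep.Indecomposable M → QRep.Stable α M := by
  classical
  intro M hM
  obtain ⟨hMnz, hMind⟩ := hM
  intro W hW hWnz hWpr
  by_contra hcon
  push_neg at hcon
  by_cases hss : ∀ Z, QRep.IsSubrep M Z → (∃ x, Z x ≠ ⊥) →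
      QRep.slopeVec α (QRep.dimVecOf M Z) ≤ QRep.slope α M
  · -- Case 2 : M is semistable, W is a destabilizer of equal slope
    have hUslope : QRep.slopeVec α (QRep.dimVecOf M W) = QRep.slope α M :=
      le_antisymm (hss W hW hWnz) hcon
    obtain ⟨A, B, hAnz, hBnz, hsame⟩ := QRep.case2 α M hMnz W hW hWnz hWpr hUslope hss
    exact hMind A B (hα M (QRep.prodRep A B) hsame) ⟨hAnz, hBnz⟩
  · -- Case 1 : M is not semistable
    obtain ⟨C⟩ := QRep.chain_exists α M (QRep.codim M (fun _ => ⊥)) (fun _ => ⊥)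
      (QRep.isSubrep_bot M) (QRep.bot_ne_top_of_nonzero hMnz) le_rfl
    have hn2 : 2 ≤ C.n := by
      by_contra h
      have hn1 : C.n = 1 := by have := C.npos; omega
      apply hss
      intro Z hZ hZnz
      have hW1 : ∀ x, C.W 1 x = ⊤ := by
        intro x
        have := C.wtop x
        rwa [hn1] at this
      have cw0 : ∀ x, C.W 0 x = ⊥ := fun x => congrFun C.w0 x
      have hres := C.ss 0 C.npos Z hZ
        (fun x => by rw [cw0 x]; exact bot_le)
        (fun x => by rw [hW1 x]; exact le_top)
        (by obtain ⟨x, hx⟩ := hZnz; exact ⟨x, by rw [cw0 x]; exact hx⟩)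
      have e1 : QRep.quotDimVec M (C.W 0) Z = QRep.dimVecOf M Z := by
        rw [C.w0, QRep.quotDimVec_bot]
      have e2 : QRep.quotDimVec M (C.W 0) (C.W (0+1)) = QRep.dimVec M := by
        have hf : C.W (0+1) = fun _ => ⊤ := funext hW1
        rw [C.w0, hf, QRep.quotDimVec_bot_top]
      rw [e1, e2] at hres
      exact hres
    obtain ⟨A, B, hAnz, hBnz, hsame⟩ := QRep.case1 α M C hn2
    exact hMind A B (hα M (QRep.prodRep A B) hsame) ⟨hAnz, hBnz⟩
end

section
/- Let Q be a type A_ℓ quiver with orientation τ. If every interval indecomposable I_τ[a,b] is α-stable for a central charge α : Q₀ → ℝ, then for each fixed b the map a ↦ μ_α(I_τ[a,b]) is injective on {0,…,b}. -/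
open scoped BigOperators

namespace QRep

variable {K : Type} [Field K]

/-- The canonical map between two submodules of `K`: the inclusion when it exists,
and zero otherwise. -/
noncomputable def homOfSub (P Q : Submodule K K) : P →ₗ[K] Q :=
  open scoped Classical in
  if h : P ≤ Q then Submodule.inclusion h else 0

/-- The indicator representation `I[S]` supported on `S`: the ground field at the
vertices of `S` with identity maps whenever possible, and `0` elsewhere. -/
noncomputable def indRep {Q₀ Q₁ : Type} (σ τ : Q₁ → Q₀) (S : Q₀ → Prop)
    [DecidablePred S] : QRep Q₀ Q₁ σ τ K where
  V x := ↥(if S x then (⊤ : Submodule K K) else ⊥)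
  f _ := homOfSub _ _

end QRep

/-- Source map of the type `A_ℓ` quiver with orientation `o` (`true` = forward). -/
def Asrc (ℓ : ℕ) (o : Fin ℓ → Bool) : Fin ℓ → Fin (ℓ+1) :=
  fun e => if o e then e.castSucc else e.succ

/-- Target map of the type `A_ℓ` quiver with orientation `o`. -/
def Atgt (ℓ : ℕ) (o : Fin ℓ → Bool) : Fin ℓ → Fin (ℓ+1) :=
  fun e => if o e then e.succ else e.castSucc

/-- The interval representation `I_τ[a,b]` of the type `A_ℓ` quiver with orientation `o`. -/
noncomputable def intervalRep (K : Type) [Field K] (ℓ : ℕ) (o : Fin ℓ → Bool) (a b : ℕ) :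
    QRep (Fin (ℓ+1)) (Fin ℓ) (Asrc ℓ o) (Atgt ℓ o) K :=
  QRep.indRep _ _ (fun x => a ≤ (x : ℕ) ∧ (x : ℕ) ≤ b)


section AuxLemmas

variable {K : Type} [Field K]

lemma aux_finrank_ite (P : Prop) [Decidable P] :
    Module.finrank K ↥(if P then (⊤ : Submodule K K) else ⊥) = if P then 1 else 0 := by
  by_cases h : P
  · rw [if_pos h, if_pos h, finrank_top, Module.finrank_self]
  · rw [if_neg h, if_neg h]; exact finrank_bot K K

lemma aux_map_le {A B : Type} [AddCommGroup A] [Module K A]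
    [AddCommGroup B] [Module K B] (f : A →ₗ[K] B) (X : Submodule K A) (Y : Submodule K B)
    (h : X = ⊥ ∨ Y = ⊤ ∨ Subsingleton A ∨ Subsingleton B) :
    Submodule.map f X ≤ Y := by
  rcases h with h | h | h | h
  · simp [h]
  · simp [h]
  · rintro y ⟨x, _, rfl⟩
    have : x = 0 := Subsingleton.elim x 0
    simp [this]
  · intro y _
    have : y = 0 := Subsingleton.elim y 0
    simp [this]

lemma aux_isSubrep {ℓ : ℕ} (o : Fin ℓ → Bool) (S T : Fin (ℓ+1) → Prop)
    [DecidablePred S] [DecidablePred T]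
    (h : ∀ e, T (Asrc ℓ o e) → S (Asrc ℓ o e) → S (Atgt ℓ o e) → T (Atgt ℓ o e)) :
    QRep.IsSubrep (QRep.indRep (K := K) (Asrc ℓ o) (Atgt ℓ o) S)
      (fun x => if T x then ⊤ else ⊥) := by
  intro e
  apply aux_map_le
  by_cases hTσ : T (Asrc ℓ o e)
  · by_cases hSσ : S (Asrc ℓ o e)
    · by_cases hSτ : S (Atgt ℓ o e)
      · right; left; simp [h e hTσ hSσ hSτ]
      · right; right; right
        show Subsingleton ↥(if S (Atgt ℓ o e) then (⊤ : Submodule K K) else ⊥)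
        rw [if_neg hSτ]; infer_instance
    · right; right; left
      show Subsingleton ↥(if S (Asrc ℓ o e) then (⊤ : Submodule K K) else ⊥)
      rw [if_neg hSσ]; infer_instance
  · left; simp [hTσ]

lemma aux_dimVec (ℓ : ℕ) (o : Fin ℓ → Bool) (S : Fin (ℓ+1) → Prop) [DecidablePred S]
    (x : Fin (ℓ+1)) :
    QRep.dimVec (QRep.indRep (K := K) (Asrc ℓ o) (Atgt ℓ o) S) x = if S x then 1 else 0 := by
  show Module.finrank K ↥(if S x then (⊤ : Submodule K K) else ⊥) = if S x then 1 else 0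
  exact aux_finrank_ite _

lemma aux_dimVecOf (ℓ : ℕ) (o : Fin ℓ → Bool) (S T : Fin (ℓ+1) → Prop)
    [DecidablePred S] [DecidablePred T] (hTS : ∀ x, T x → S x) (x : Fin (ℓ+1)) :
    QRep.dimVecOf (QRep.indRep (K := K) (Asrc ℓ o) (Atgt ℓ o) S)
      (fun x => if T x then ⊤ else ⊥) x = if T x then 1 else 0 := by
  simp only [QRep.dimVecOf]
  beta_reduce
  by_cases hT : T x
  · rw [if_pos hT, if_pos hT, finrank_top]
    show Module.finrank K ↥(if S x then (⊤ : Submodule K K) else ⊥) = 1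
    rw [if_pos (hTS x hT), finrank_top, Module.finrank_self]
  · rw [if_neg hT, if_neg hT]
    exact finrank_bot K _

lemma aux_bot_ne_top {M : Type} [AddCommGroup M] [Module K M] (h : Nontrivial M) :
    (⊥ : Submodule K M) ≠ ⊤ := by
  intro hbt
  obtain ⟨x, y, hxy⟩ := h.exists_pair_ne
  apply hxy
  have hx : x ∈ (⊥ : Submodule K M) := hbt.symm ▸ Submodule.mem_top
  have hy : y ∈ (⊥ : Submodule K M) := hbt.symm ▸ Submodule.mem_top
  rw [Submodule.mem_bot] at hx hy
  rw [hx, hy]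

lemma aux_nontrivial (ℓ : ℕ) (o : Fin ℓ → Bool) (S : Fin (ℓ+1) → Prop) [DecidablePred S]
    (x : Fin (ℓ+1)) (hS : S x) :
    Nontrivial ((QRep.indRep (K := K) (Asrc ℓ o) (Atgt ℓ o) S).V x) := by
  show Nontrivial ↥(if S x then (⊤ : Submodule K K) else ⊥)
  rw [if_pos hS]
  exact ⟨⟨⟨0, Submodule.mem_top⟩, ⟨1, Submodule.mem_top⟩, by simp [Subtype.ext_iff]⟩⟩

end AuxLemmas

/-- Key lemma: for `a' < a <= b <= l` the slopes of `I[a,b]` and `I[a',b]` differ. -/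
lemma slope_ne_of_lt
    (K : Type) [Field K] (ℓ : ℕ) (o : Fin ℓ → Bool) (α : Fin (ℓ+1) → ℝ)
    (hstab : ∀ a b : ℕ, a ≤ b → b ≤ ℓ → QRep.Stable α (intervalRep K ℓ o a b))
    (b : ℕ) (hb : b ≤ ℓ) (a a' : ℕ) (ha : a ≤ b) (haa : a' < a) :
    QRep.slope α (intervalRep K ℓ o a b) ≠ QRep.slope α (intervalRep K ℓ o a' b) := by
  have ha' : a' ≤ b := le_trans (le_of_lt haa) ha
  have hstabM := hstab a' b ha' hb
  have hslope : ∀ c d : ℕ, QRep.slope α (intervalRep K ℓ o c d) =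
      QRep.slopeVec α (fun x => if c ≤ (x : ℕ) ∧ (x : ℕ) ≤ d then 1 else 0) := by
    intro c d
    unfold QRep.slope
    congr 1
    funext x
    exact aux_dimVec ℓ o _ x
  have hpos : ∀ c d : ℕ, c ≤ d → d ≤ ℓ →
      (0:ℝ) < ∑ x : Fin (ℓ+1), ((if c ≤ (x : ℕ) ∧ (x : ℕ) ≤ d then 1 else 0 : ℕ) : ℝ) := by
    intro c d hcd hd
    apply Finset.sum_pos'
    · intro i _; positivity
    · refine ⟨⟨c, by omega⟩, Finset.mem_univ _, ?_⟩
      simp [hcd]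
  by_cases hoa : o ⟨a - 1, by omega⟩ = true
  · -- I[a,b] is a subrepresentation of I[a',b]
    have hsub : QRep.IsSubrep (intervalRep K ℓ o a' b)
        (fun x => if a ≤ (x : ℕ) ∧ (x : ℕ) ≤ b then ⊤ else ⊥) := by
      apply aux_isSubrep
      intro e hT hS1 hS2
      by_cases ho : o e = true
      · simp only [Asrc, Atgt, ho, if_true, Fin.coe_castSucc, Fin.val_succ] at hT hS1 hS2 ⊢
        omega
      · rw [Bool.not_eq_true] at ho
        simp only [Asrc, Atgt, ho, Bool.false_eq_true, if_false, Fin.coe_castSucc,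
          Fin.val_succ] at hT hS1 hS2 ⊢
        by_cases he : (e : ℕ) + 1 = a
        · exfalso
          have heq : e = ⟨a - 1, by omega⟩ := Fin.ext (by simp only [Fin.val_mk]; omega)
          rw [heq] at ho
          exact Bool.false_ne_true (ho.symm.trans hoa)
        · omega
    have hne1 : ∃ x : Fin (ℓ+1), (if a ≤ (x : ℕ) ∧ (x : ℕ) ≤ b then
        (⊤ : Submodule K ((intervalRep K ℓ o a' b).V x)) else ⊥) ≠ ⊥ := by
      refine ⟨⟨a, by omega⟩, ?_⟩
      rw [if_pos (by simp only [Fin.val_mk]; omega)]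
      have := aux_nontrivial (K := K) ℓ o
        (fun x => a' ≤ (x : ℕ) ∧ (x : ℕ) ≤ b) ⟨a, by omega⟩ (by simp only [Fin.val_mk]; omega)
      exact Ne.symm (aux_bot_ne_top this)
    have hne2 : ∃ x : Fin (ℓ+1), (if a ≤ (x : ℕ) ∧ (x : ℕ) ≤ b then
        (⊤ : Submodule K ((intervalRep K ℓ o a' b).V x)) else ⊥) ≠ ⊤ := by
      refine ⟨⟨a', by omega⟩, ?_⟩
      rw [if_neg (by simp only [Fin.val_mk]; omega)]
      have := aux_nontrivial (K := K) ℓ o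
        (fun x => a' ≤ (x : ℕ) ∧ (x : ℕ) ≤ b) ⟨a', by omega⟩ (by simp only [Fin.val_mk]; omega)
      exact aux_bot_ne_top this
    have hlt := hstabM _ hsub hne1 hne2
    have hdov : QRep.slopeVec α (QRep.dimVecOf (intervalRep K ℓ o a' b)
        (fun x => if a ≤ (x : ℕ) ∧ (x : ℕ) ≤ b then ⊤ else ⊥)) =
        QRep.slope α (intervalRep K ℓ o a b) := by
      rw [hslope a b]
      congr 1
      funext x
      exact aux_dimVecOf ℓ o _ _ (fun x hx => ⟨by omega, hx.2⟩) x
    rw [hdov] at hlt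
    exact ne_of_lt hlt
  · -- I[a',a-1] is a subrepresentation of I[a',b]
    have hsub : QRep.IsSubrep (intervalRep K ℓ o a' b)
        (fun x => if a' ≤ (x : ℕ) ∧ (x : ℕ) ≤ a - 1 then ⊤ else ⊥) := by
      apply aux_isSubrep
      intro e hT hS1 hS2
      by_cases ho : o e = true
      · simp only [Asrc, Atgt, ho, if_true, Fin.coe_castSucc, Fin.val_succ] at hT hS1 hS2 ⊢
        by_cases he : (e : ℕ) = a - 1
        · exfalso
          have heq : e = ⟨a - 1, by omega⟩ := Fin.ext (by simp only [Fin.val_mk]; omega)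
          rw [heq] at ho
          exact hoa ho
        · omega
      · rw [Bool.not_eq_true] at ho
        simp only [Asrc, Atgt, ho, Bool.false_eq_true, if_false, Fin.coe_castSucc,
          Fin.val_succ] at hT hS1 hS2 ⊢
        omega
    have hne1 : ∃ x : Fin (ℓ+1), (if a' ≤ (x : ℕ) ∧ (x : ℕ) ≤ a - 1 then
        (⊤ : Submodule K ((intervalRep K ℓ o a' b).V x)) else ⊥) ≠ ⊥ := by
      refine ⟨⟨a', by omega⟩, ?_⟩
      rw [if_pos (by simp only [Fin.val_mk]; omega)]
      have := aux_nontrivial (K := K) ℓ o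
        (fun x => a' ≤ (x : ℕ) ∧ (x : ℕ) ≤ b) ⟨a', by omega⟩ (by simp only [Fin.val_mk]; omega)
      exact Ne.symm (aux_bot_ne_top this)
    have hne2 : ∃ x : Fin (ℓ+1), (if a' ≤ (x : ℕ) ∧ (x : ℕ) ≤ a - 1 then
        (⊤ : Submodule K ((intervalRep K ℓ o a' b).V x)) else ⊥) ≠ ⊤ := by
      refine ⟨⟨a, by omega⟩, ?_⟩
      rw [if_neg (by simp only [Fin.val_mk]; omega)]
      have := aux_nontrivial (K := K) ℓ o
        (fun x => a' ≤ (x : ℕ) ∧ (x : ℕ) ≤ b) ⟨a, by omega⟩ (by simp only [Fin.val_mk]; omega)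
      exact aux_bot_ne_top this
    have hlt := hstabM _ hsub hne1 hne2
    have hdov : QRep.slopeVec α (QRep.dimVecOf (intervalRep K ℓ o a' b)
        (fun x => if a' ≤ (x : ℕ) ∧ (x : ℕ) ≤ a - 1 then ⊤ else ⊥)) =
        QRep.slopeVec α (fun x => if a' ≤ (x : ℕ) ∧ (x : ℕ) ≤ a - 1 then 1 else 0) := by
      congr 1
      funext x
      exact aux_dimVecOf ℓ o _ _ (fun x hx => ⟨hx.1, by omega⟩) x
    rw [hdov] at hlt
    -- mediant argument
    intro heq
    rw [hslope a b, hslope a' b] at heq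
    have hsplit : ∀ x : Fin (ℓ+1),
        ((if a' ≤ (x : ℕ) ∧ (x : ℕ) ≤ b then 1 else 0 : ℕ) : ℝ) =
        ((if a' ≤ (x : ℕ) ∧ (x : ℕ) ≤ a - 1 then 1 else 0 : ℕ) : ℝ) +
        ((if a ≤ (x : ℕ) ∧ (x : ℕ) ≤ b then 1 else 0 : ℕ) : ℝ) := by
      intro x
      split_ifs <;> first | (exfalso; omega) | norm_num
    set S1 := ∑ x : Fin (ℓ+1), α x * ((if a' ≤ (x : ℕ) ∧ (x : ℕ) ≤ a - 1 then 1 else 0 : ℕ) : ℝ) with hS1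
    set T1 := ∑ x : Fin (ℓ+1), ((if a' ≤ (x : ℕ) ∧ (x : ℕ) ≤ a - 1 then 1 else 0 : ℕ) : ℝ) with hT1
    set S2 := ∑ x : Fin (ℓ+1), α x * ((if a ≤ (x : ℕ) ∧ (x : ℕ) ≤ b then 1 else 0 : ℕ) : ℝ) with hS2
    set T2 := ∑ x : Fin (ℓ+1), ((if a ≤ (x : ℕ) ∧ (x : ℕ) ≤ b then 1 else 0 : ℕ) : ℝ) with hT2
    have hdS : ∑ x : Fin (ℓ+1), α x * ((if a' ≤ (x : ℕ) ∧ (x : ℕ) ≤ b then 1 else 0 : ℕ) : ℝ) = S1 + S2 := by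
      rw [hS1, hS2, ← Finset.sum_add_distrib]
      refine Finset.sum_congr rfl fun x _ => ?_
      rw [← mul_add, ← hsplit x]
    have hdT : ∑ x : Fin (ℓ+1), ((if a' ≤ (x : ℕ) ∧ (x : ℕ) ≤ b then 1 else 0 : ℕ) : ℝ) = T1 + T2 := by
      rw [hT1, hT2, ← Finset.sum_add_distrib]
      exact Finset.sum_congr rfl fun x _ => hsplit x
    have hT1pos : 0 < T1 := hpos a' (a-1) (by omega) (by omega)
    have hT2pos : 0 < T2 := hpos a b ha hb
    rw [hslope a' b] at hlt
    simp only [QRep.slopeVec] at hlt heq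
    rw [hdS, hdT, ← hS1, ← hT1] at hlt
    rw [hdS, hdT, ← hS2, ← hT2] at heq
    rw [div_lt_div_iff₀ hT1pos (by linarith)] at hlt
    rw [div_eq_div_iff hT2pos.ne' (by positivity)] at heq
    nlinarith

/-- If every interval indecomposable `I_τ[a,b]` of a type `A_ℓ` quiver is `α`-stable,
then for each fixed `b` the map `a ↦ μ_α(I_τ[a,b])` is injective on `{0,…,b}`. -/
theorem slope_injective_of_all_intervals_stable
    (K : Type) [Field K] (ℓ : ℕ) (o : Fin ℓ → Bool) (α : Fin (ℓ+1) → ℝ)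
    (hstab : ∀ a b : ℕ, a ≤ b → b ≤ ℓ → QRep.Stable α (intervalRep K ℓ o a b)) :
    ∀ b ≤ ℓ, ∀ a a' : ℕ, a ≤ b → a' ≤ b →
      QRep.slope α (intervalRep K ℓ o a b) = QRep.slope α (intervalRep K ℓ o a' b) →
      a = a' := by
  intro b hb a a' ha ha' heq
  rcases lt_trichotomy a a' with h | h | h
  · exact absurd heq.symm (slope_ne_of_lt K ℓ o α hstab b hb a' a ha' h)
  · exact h
  · exact absurd heq (slope_ne_of_lt K ℓ o α hstab b hb a a' ha h)
end

section
/- For the equioriented A_ℓ quiver, if α satisfies α(x_0) > α(x_1) > ⋯ > α(x_ℓ), then every interval module I[a,b] is α-stable. -/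
open scoped BigOperators

section aux

lemma avg_lt {X : Type} [DecidableEq X] (A B : Finset X) (α : X → ℝ) (hBA : B ⊆ A) (hB : B.Nonempty)
    (hd : (A \ B).Nonempty) (h : ∀ x ∈ A \ B, ∀ y ∈ B, α y < α x) :
    (∑ y ∈ B, α y) / B.card < (∑ x ∈ A, α x) / A.card := by
  have hBc : (0:ℝ) < B.card := by exact_mod_cast hB.card_pos
  have hDc : (0:ℝ) < (A \ B).card := by exact_mod_cast hd.card_pos
  have hsum : ∑ x ∈ A \ B, α x + ∑ y ∈ B, α y = ∑ x ∈ A, α x := Finset.sum_sdiff hBA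
  have hcard : ((A \ B).card : ℝ) + B.card = A.card := by
    exact_mod_cast Finset.card_sdiff_add_card_eq_card hBA
  have key : ∀ x ∈ A \ B, (∑ y ∈ B, α y) < B.card * α x := by
    intro x hx
    calc ∑ y ∈ B, α y < ∑ _y ∈ B, α x :=
          Finset.sum_lt_sum_of_nonempty hB (fun y hy => h x hx y hy)
    _ = B.card * α x := by rw [Finset.sum_const, nsmul_eq_mul]
  have key2 : ((A \ B).card : ℝ) * ∑ y ∈ B, α y < B.card * ∑ x ∈ A \ B, α x := by
    calc ((A \ B).card : ℝ) * ∑ y ∈ B, α y = ∑ _x ∈ A \ B, ∑ y ∈ B, α y := by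
          rw [Finset.sum_const, nsmul_eq_mul]
      _ < ∑ x ∈ A \ B, B.card * α x := Finset.sum_lt_sum_of_nonempty hd key
      _ = B.card * ∑ x ∈ A \ B, α x := by rw [Finset.mul_sum]
  rw [div_lt_div_iff₀ hBc (by linarith)]
  calc (∑ y ∈ B, α y) * A.card
      = ((A \ B).card : ℝ) * ∑ y ∈ B, α y + (∑ y ∈ B, α y) * B.card := by
        rw [← hcard]; ring
    _ < (B.card : ℝ) * ∑ x ∈ A \ B, α x + (∑ y ∈ B, α y) * B.card := by linarith
    _ = (∑ x ∈ A, α x) * B.card := by rw [← hsum]; ring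

lemma fin_strictAnti {n : ℕ} (α : Fin (n+1) → ℝ) (hα : ∀ i : Fin n, α i.castSucc > α i.succ) :
    ∀ i j : Fin (n+1), i < j → α j < α i := by
  have key : ∀ k : ℕ, ∀ i j : Fin (n+1), (j:ℕ) = (i:ℕ) + k + 1 → α j < α i := by
    intro k
    induction k with
    | zero =>
      intro i j hj
      have hi : (i:ℕ) < n := by omega
      have h := hα ⟨i, hi⟩
      have h1 : (⟨i, hi⟩ : Fin n).castSucc = i := by ext; simp
      have h2 : (⟨i, hi⟩ : Fin n).succ = j := by ext; simp; omega
      rw [h1, h2] at h; exact h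
    | succ k ih =>
      intro i j hj
      have hm : (i:ℕ) + k + 1 < n + 1 := by omega
      have h0 := ih i ⟨(i:ℕ)+k+1, hm⟩ (by simp)
      have hi : (i:ℕ) + k + 1 < n := by omega
      have h := hα ⟨(i:ℕ)+k+1, hi⟩
      have h1 : (⟨(i:ℕ)+k+1, hi⟩ : Fin n).castSucc = ⟨(i:ℕ)+k+1, hm⟩ := by ext; simp
      have h2 : (⟨(i:ℕ)+k+1, hi⟩ : Fin n).succ = j := by ext; simp; omega
      rw [h1, h2] at h
      linarith
  intro i j hij
  exact key ((j:ℕ) - (i:ℕ) - 1) i j (by have := hij; omega)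

variable (K : Type) [Field K] (ℓ a b : ℕ)

lemma intervalRep_Vdim (x : Fin (ℓ+1)) :
    Module.finrank K ((intervalRep K ℓ (fun _ => true) a b).V x)
      = if (a ≤ (x:ℕ) ∧ (x:ℕ) ≤ b) then 1 else 0 := by
  show Module.finrank K ↥(if (a ≤ (x:ℕ) ∧ (x:ℕ) ≤ b) then (⊤ : Submodule K K) else ⊥) = _
  by_cases h : a ≤ (x:ℕ) ∧ (x:ℕ) ≤ b
  · rw [congrArg (fun S : Submodule K K => Module.finrank K ↥S) (if_pos h), if_pos h]
    rw [finrank_top]; exact Module.finrank_self K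
  · rw [congrArg (fun S : Submodule K K => Module.finrank K ↥S) (if_neg h), if_neg h]
    exact finrank_bot K K

lemma intervalRep_f_inj (e : Fin ℓ) (h1 : a ≤ (e:ℕ) ∧ (e:ℕ) ≤ b)
    (h2 : a ≤ (e:ℕ)+1 ∧ (e:ℕ)+1 ≤ b) :
    Function.Injective ((intervalRep K ℓ (fun _ => true) a b).f e) := by
  have hPQ : (if (a ≤ ((Asrc ℓ (fun _ => true) e):ℕ) ∧ ((Asrc ℓ (fun _ => true) e):ℕ) ≤ b) then (⊤ : Submodule K K) else ⊥)
      ≤ (if (a ≤ ((Atgt ℓ (fun _ => true) e):ℕ) ∧ ((Atgt ℓ (fun _ => true) e):ℕ) ≤ b) then (⊤ : Submodule K K) else ⊥) := by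
    have hs : ((Asrc ℓ (fun _ => true) e):ℕ) = (e:ℕ) := by simp [Asrc]
    have ht : ((Atgt ℓ (fun _ => true) e):ℕ) = (e:ℕ)+1 := by simp [Atgt]
    rw [hs, ht, if_pos h1, if_pos h2]
  have hf : (intervalRep K ℓ (fun _ => true) a b).f e = Submodule.inclusion hPQ := by
    show QRep.homOfSub _ _ = _
    rw [QRep.homOfSub, dif_pos hPQ]
  rw [hf]
  exact Submodule.inclusion_injective hPQ

end aux

/-- For the equioriented `A_ℓ` quiver, if `α(x_0) > α(x_1) > ⋯ > α(x_ℓ)`, then every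
interval module `I[a,b]` is `α`-stable. -/
theorem intervals_stable_of_strictly_decreasing (K : Type) [Field K] (ℓ : ℕ)
    (α : Fin (ℓ+1) → ℝ) (hα : ∀ i : Fin ℓ, α i.castSucc > α i.succ) :
    ∀ a b : ℕ, a ≤ b → b ≤ ℓ →
      QRep.Stable α (intervalRep K ℓ (fun _ => true) a b) := by
  intro a b hab hbl W hsub hne hproper
  classical
  -- basic dimension facts
  have hV : ∀ x, Module.finrank K ((intervalRep K ℓ (fun _ => true) a b).V x) = if (a ≤ (x:ℕ) ∧ (x:ℕ) ≤ b) then 1 else 0 :=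
    intervalRep_Vdim K ℓ a b
  have hWle : ∀ x, Module.finrank K (W x) ≤ Module.finrank K ((intervalRep K ℓ (fun _ => true) a b).V x) :=
    fun x => Submodule.finrank_le (W x)
  have hWbot : ∀ x, W x = ⊥ ↔ Module.finrank K (W x) = 0 := by
    intro x
    exact (Submodule.finrank_eq_zero).symm
  -- support of W
  have hsupp : ∀ x, W x ≠ ⊥ → a ≤ (x:ℕ) ∧ (x:ℕ) ≤ b := by
    intro x hx
    by_contra h
    have h0 : Module.finrank K (W x) = 0 := by
      have := hWle x
      rw [hV x, if_neg h] at this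
      omega
    exact hx ((hWbot x).mpr h0)
  have hWone : ∀ x, W x ≠ ⊥ → Module.finrank K (W x) = 1 := by
    intro x hx
    have h1 := hWle x
    rw [hV x, if_pos (hsupp x hx)] at h1
    have h2 : Module.finrank K (W x) ≠ 0 := fun h => hx ((hWbot x).mpr h)
    omega
  -- propagation along edges
  have prop : ∀ e : Fin ℓ, (a ≤ (e:ℕ) ∧ (e:ℕ) ≤ b) → (a ≤ (e:ℕ)+1 ∧ (e:ℕ)+1 ≤ b) →
      W (Asrc ℓ (fun _ => true) e) ≠ ⊥ → W (Atgt ℓ (fun _ => true) e) ≠ ⊥ := by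
    intro e h1 h2 hWs hbot
    obtain ⟨v, hv, hv0⟩ := (Submodule.ne_bot_iff _).mp hWs
    have hmem : (intervalRep K ℓ (fun _ => true) a b).f e v ∈ W (Atgt ℓ (fun _ => true) e) := hsub e ⟨v, hv, rfl⟩
    rw [hbot, Submodule.mem_bot] at hmem
    exact hv0 (intervalRep_f_inj K ℓ a b e h1 h2 (by simpa using hmem))
  -- the support finset
  set T : Finset (Fin (ℓ+1)) := Finset.univ.filter (fun x => W x ≠ ⊥) with hT
  have hmemT : ∀ x, x ∈ T ↔ W x ≠ ⊥ := by
    intro x; simp [hT]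
  have hTne : T.Nonempty := by
    obtain ⟨x, hx⟩ := hne
    exact ⟨x, (hmemT x).mpr hx⟩
  set x₀ := T.min' hTne with hx₀
  set a' : ℕ := (x₀ : ℕ) with ha'
  have hx₀T : x₀ ∈ T := T.min'_mem hTne
  have ha'supp : a ≤ a' ∧ a' ≤ b := hsupp x₀ ((hmemT x₀).mp hx₀T)
  -- characterization of T
  have hchar : ∀ x : Fin (ℓ+1), x ∈ T ↔ (a' ≤ (x:ℕ) ∧ (x:ℕ) ≤ b) := by
    have step : ∀ n : ℕ, ∀ x : Fin (ℓ+1), (x:ℕ) = a' + n → (x:ℕ) ≤ b → x ∈ T := by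
      intro n
      induction n with
      | zero =>
        intro x hx _
        have : x = x₀ := Fin.ext (by omega)
        rw [this]; exact hx₀T
      | succ n ih =>
        intro x hx hxb
        have hyl : a' + n < ℓ + 1 := by omega
        set y : Fin (ℓ+1) := ⟨a' + n, hyl⟩ with hy
        have hyT : y ∈ T := ih y rfl (by simp [hy]; omega)
        have hel : a' + n < ℓ := by omega
        set e : Fin ℓ := ⟨a' + n, hel⟩ with he
        have hes : Asrc ℓ (fun _ => true) e = y := Fin.ext (by simp [Asrc, hy, he])
        have het : Atgt ℓ (fun _ => true) e = x := Fin.ext (by simp [Atgt, he]; omega)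
        have h1 : a ≤ ((e:ℕ)) ∧ ((e:ℕ)) ≤ b := by
          constructor <;> simp [he] <;> omega
        have h2 : a ≤ ((e:ℕ))+1 ∧ ((e:ℕ))+1 ≤ b := by
          constructor <;> simp [he] <;> omega
        have := prop e h1 h2 (by rw [hes]; exact (hmemT y).mp hyT)
        rw [het] at this
        exact (hmemT x).mpr this
    intro x
    constructor
    · intro hx
      refine ⟨T.min'_le x hx, (hsupp x ((hmemT x).mp hx)).2⟩
    · intro ⟨h1, h2⟩
      exact step ((x:ℕ) - a') x (by omega) h2
  -- find c in [a,b] with W c = ⊥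
  obtain ⟨c, hc⟩ := hproper
  have hcbot : W c = ⊥ ∧ a ≤ (c:ℕ) ∧ (c:ℕ) ≤ b := by
    by_cases hs : a ≤ (c:ℕ) ∧ (c:ℕ) ≤ b
    · by_cases hb : W c = ⊥
      · exact ⟨hb, hs⟩
      · exfalso
        apply hc
        apply Submodule.eq_top_of_finrank_eq
        rw [hWone c hb, hV c, if_pos hs]
    · exfalso
      apply hc
      have hdim0 : Module.finrank K ((intervalRep K ℓ (fun _ => true) a b).V c) = 0 := by rw [hV c, if_neg hs]
      have : Subsingleton ((intervalRep K ℓ (fun _ => true) a b).V c) :=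
        Module.finrank_zero_iff.mp hdim0
      rw [eq_top_iff]
      intro v _
      have : v = 0 := Subsingleton.elim v 0
      rw [this]; exact (W c).zero_mem
  have hca : (c:ℕ) < a' := by
    by_contra h
    push_neg at h
    have : c ∈ T := (hchar c).mpr ⟨h, hcbot.2.2⟩
    exact ((hmemT c).mp this) hcbot.1
  have haa' : a < a' := by omega
  -- slope computations
  have slope_eq : ∀ (d : Fin (ℓ+1) → ℕ) (S : Finset (Fin (ℓ+1))),
      (∀ x, d x = if x ∈ S then 1 else 0) →
      QRep.slopeVec α d = (∑ x ∈ S, α x) / (S.card : ℝ) := by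
    intro d S hd
    unfold QRep.slopeVec
    have hnum : ∑ x, α x * (d x : ℝ) = ∑ x ∈ S, α x := by
      have h1 : ∀ x ∈ Finset.univ, α x * (d x : ℝ) = if x ∈ S then α x else 0 := by
        intro x _
        rw [hd x]; split_ifs <;> simp
      rw [Finset.sum_congr rfl h1, Finset.sum_ite_mem, Finset.univ_inter]
    have hden : ∑ x, (d x : ℝ) = S.card := by
      have h1 : ∀ x ∈ Finset.univ, (d x : ℝ) = if x ∈ S then (1:ℝ) else 0 := by
        intro x _
        rw [hd x]; split_ifs <;> simp
      rw [Finset.sum_congr rfl h1, Finset.sum_ite_mem, Finset.univ_inter, Finset.sum_const,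
        nsmul_eq_mul, mul_one]
    rw [hnum, hden]
  set A : Finset (Fin (ℓ+1)) := Finset.univ.filter (fun x => a ≤ (x:ℕ) ∧ (x:ℕ) ≤ b) with hA
  have hslopeM : QRep.slope α (intervalRep K ℓ (fun _ => true) a b) = (∑ x ∈ A, α x) / (A.card : ℝ) := by
    apply slope_eq
    intro x
    rw [QRep.dimVec, hV x]
    simp [hA]
  have hslopeW : QRep.slopeVec α (QRep.dimVecOf (intervalRep K ℓ (fun _ => true) a b) W) = (∑ x ∈ T, α x) / (T.card : ℝ) := by
    apply slope_eq
    intro x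
    rw [QRep.dimVecOf]
    by_cases hx : W x = ⊥
    · rw [if_neg (fun h => ((hmemT x).mp h) hx), (hWbot x).mp hx]
    · rw [if_pos ((hmemT x).mpr hx), hWone x hx]
  rw [hslopeM, hslopeW]
  -- final inequality
  apply avg_lt
  · intro x hx
    have := (hchar x).mp hx
    simp only [hA, Finset.mem_filter, Finset.mem_univ, true_and]
    omega
  · exact hTne
  · refine ⟨c, ?_⟩
    rw [Finset.mem_sdiff]
    constructor
    · simp only [hA, Finset.mem_filter, Finset.mem_univ, true_and]
      exact hcbot.2
    · intro h
      exact ((hmemT c).mp h) hcbot.1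
  · intro x hx y hy
    rw [Finset.mem_sdiff] at hx
    have hx2 : ¬(a' ≤ (x:ℕ) ∧ (x:ℕ) ≤ b) := fun h => hx.2 ((hchar x).mpr h)
    have hxA : a ≤ (x:ℕ) ∧ (x:ℕ) ≤ b := by
      have := hx.1
      simpa [hA] using this
    have hy' := (hchar y).mp hy
    have hxy : x < y := by
      rw [Fin.lt_def]
      omega
    exact fin_strictAnti α hα x y hxy
end

section
/- Let (P, ≤) be a finite distributive lattice, U ⊆ P an up-closed subset with complement D = P \ U. For any subset A ⊆ D, we have |A|·|U| ≤ |D|·|U ∩ A⁺|, where A⁺ denotes the smallest up-closed subset of P containing A. -/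
open Finset
open scoped Classical FinsetFamily

/-- Let `P` be a finite distributive lattice, `U ⊆ P` an up-closed subset with complement
`D = P \ U`. For any subset `A ⊆ D` we have `|A|·|U| ≤ |D|·|U ∩ A⁺|`, where `A⁺` is the
smallest up-closed subset of `P` containing `A`. -/
theorem upclosed_card_inequality {P : Type} [DistribLattice P] [Fintype P] [DecidableEq P]
    (U : Finset P) (hU : ∀ x ∈ U, ∀ y, x ≤ y → y ∈ U)
    (A : Finset P) (hA : A ⊆ Uᶜ) :
    A.card * U.card ≤
      Uᶜ.card * (U ∩ (univ.filter fun y => ∃ a ∈ A, a ≤ y)).card := by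
  set T : Finset P := univ.filter fun y => ∃ a ∈ A, a ≤ y with hT
  -- T is up-closed
  have hTup : ∀ x ∈ T, ∀ y, x ≤ y → y ∈ T := by
    intro x hx y hxy
    simp only [hT, mem_filter, mem_univ, true_and] at hx ⊢
    obtain ⟨a, ha, hax⟩ := hx
    exact ⟨a, ha, hax.trans hxy⟩
  -- sups = intersection
  have hsup : U ⊻ T = U ∩ T := by
    apply Finset.Subset.antisymm
    · intro z hz
      rw [Finset.mem_sups] at hz
      obtain ⟨u, hu, t, ht, rfl⟩ := hz
      exact Finset.mem_inter.2 ⟨hU u hu _ le_sup_left, hTup t ht _ le_sup_right⟩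
    · intro z hz
      rw [Finset.mem_inter] at hz
      exact Finset.mem_sups.2 ⟨z, hz.1, z, hz.2, sup_idem z⟩
  have hdaykin := Finset.le_card_infs_mul_card_sups U T
  rw [hsup] at hdaykin
  have hinf : (U ⊼ T).card ≤ Fintype.card P := by
    simpa using Finset.card_le_card (Finset.subset_univ (U ⊼ T))
  -- A and U ∩ T are disjoint subsets of T
  have hAT : A ⊆ T := by
    intro a ha
    simp only [hT, mem_filter, mem_univ, true_and]
    exact ⟨a, ha, le_rfl⟩
  have hdisj : Disjoint A (U ∩ T) := by
    refine Finset.disjoint_left.2 fun a ha hmem => ?_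
    have := hA ha
    rw [Finset.mem_compl] at this
    exact this (Finset.mem_inter.1 hmem).1
  have hcard : A.card + (U ∩ T).card ≤ T.card := by
    rw [← Finset.card_union_of_disjoint hdisj]
    exact Finset.card_le_card (Finset.union_subset hAT inter_subset_right)
  have hcompl : U.card + Uᶜ.card = Fintype.card P := Finset.card_add_card_compl U
  nlinarith [hdaykin, Nat.mul_le_mul_left U.card hcard,
    Nat.mul_le_mul_right (U ∩ T).card hinf]
end

section
/- Let V be a representation of a finite quiver Q and x a vertex. Let 0 = V⁰ ⊊ ⋯ ⊊ Vⁿ = V be the HN filtration of V along the skyscraper charge δ_x, and let j be the smallest index with V^j_x = V_x. Then for every 1 ≤ k ≤ j, the subrepresentation V^k equals the spanning subrepresentation ⟨V^k_x⟩ of V^k at x. -/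
open scoped BigOperators

/-- The skyscraper central charge at a vertex `x`. -/
def skyscraper {Q₀ : Type} [DecidableEq Q₀] (x : Q₀) : Q₀ → ℝ :=
  fun y => if y = x then 1 else 0

namespace QRep

variable {Q₀ Q₁ : Type} {σ τ : Q₁ → Q₀} {K : Type} [Field K]

/-- The spanning subrepresentation of `M` generated by the subspace `p ⊆ M_x`:
the smallest subrepresentation of `M` containing `p`. -/
noncomputable def spanAt (M : QRep Q₀ Q₁ σ τ K) (x : Q₀) (p : Submodule K (M.V x)) :
    ∀ y, Submodule K (M.V y) := fun y =>
  ⨅ (W : ∀ z, Submodule K (M.V z)) (_ : IsSubrep M W) (_ : p ≤ W x), W y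

end QRep

section Aux

open QRep

lemma slopeVec_skyscraper {Q₀ : Type} [Fintype Q₀] [DecidableEq Q₀] (x : Q₀) (d : Q₀ → ℕ) :
    QRep.slopeVec (skyscraper x) d = (d x : ℝ) / ∑ y, (d y : ℝ) := by
  unfold QRep.slopeVec skyscraper
  congr 1
  simp [ite_mul]

lemma slopeVec_skyscraper_pos {Q₀ : Type} [Fintype Q₀] [DecidableEq Q₀] (x : Q₀) (d : Q₀ → ℕ)
    (hd : 0 < d x) : 0 < QRep.slopeVec (skyscraper x) d := by
  rw [slopeVec_skyscraper]
  have h1 : (0:ℝ) < (d x : ℝ) := by exact_mod_cast hd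
  have h2 : (d x : ℝ) ≤ ∑ y, (d y : ℝ) :=
    Finset.single_le_sum (f := fun y => ((d y : ℕ) : ℝ)) (fun y _ => by positivity) (Finset.mem_univ x)
  exact div_pos h1 (lt_of_lt_of_le h1 h2)


end Aux

/-- **Skyscraper HN filtrations are spanning.** Let `0 = V⁰ ⊊ ⋯ ⊊ Vⁿ = V` be the HN
filtration of `V` along the skyscraper charge `δ_x` and let `j` be the smallest index
with `V^j_x = V_x`. Then for every `1 ≤ k ≤ j`, the subrepresentation `V^k` equals the
spanning subrepresentation `⟨V^k_x⟩`. -/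
theorem skyscraper_filtration_spanning {Q₀ Q₁ : Type} [Fintype Q₀] [DecidableEq Q₀]
    {σ τ : Q₁ → Q₀} {K : Type} [Field K]
    (V : QRep Q₀ Q₁ σ τ K) (x : Q₀) (F : QRep.HNFiltration (skyscraper x) V)
    (j : Fin (F.n+1)) (hj : F.W j x = ⊤) (hjmin : ∀ i, i < j → F.W i x ≠ ⊤) :
    ∀ k : Fin (F.n+1), k ≠ 0 → k ≤ j →
      ∀ y, F.W k y = QRep.spanAt V x (F.W k x) y := by
  classical
  have Wmono : ∀ (m' m : Fin (F.n+1)), m ≤ m' → ∀ y, F.W m y ≤ F.W m' y := by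
    intro m'
    induction m' using Fin.induction with
    | zero =>
      intro m h y
      have hm : m = 0 := le_antisymm h (Fin.zero_le m)
      rw [hm]
    | succ i ih =>
      intro m h y
      rcases lt_or_eq_of_le h with h' | h'
      · exact le_trans (ih m (Fin.le_castSucc_iff.mpr h') y) (F.mono i y)
      · rw [h']
  intro k hk0 hkj
  have hj0 : j ≠ 0 := fun h => hk0 (le_antisymm (h ▸ hkj) (Fin.zero_le k))
  set i₀ : Fin F.n := j.pred hj0 with hi₀def
  have hi₀succ : i₀.succ = j := Fin.succ_pred j hj0
  -- the x-component strictly grows at every step up to j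
  have key : ∀ i : Fin F.n, i.succ ≤ j →
      Module.finrank K (F.W i.castSucc x) < Module.finrank K (F.W i.succ x) := by
    have h₀ : Module.finrank K (F.W i₀.castSucc x) < Module.finrank K (F.W i₀.succ x) := by
      have htop : F.W i₀.succ x = ⊤ := by rw [hi₀succ]; exact hj
      have hne : F.W i₀.castSucc x ≠ ⊤ := hjmin _ (by rw [← hi₀succ]; exact (Fin.castSucc_lt_succ : i₀.castSucc < i₀.succ))
      rw [htop]
      have := Submodule.finrank_lt (K := K) (V := V.V x) hne
      simpa [finrank_top] using this
    have hpos₀ : 0 < QRep.quotDimVec V (F.W i₀.castSucc) (F.W i₀.succ) x := by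
      simp only [QRep.quotDimVec]; omega
    have hμ₀ : 0 < QRep.slopeVec (skyscraper x)
        (QRep.quotDimVec V (F.W i₀.castSucc) (F.W i₀.succ)) :=
      slopeVec_skyscraper_pos x _ hpos₀
    intro i hi
    rcases eq_or_lt_of_le hi with he | hlt
    · have hii : i = i₀ := Fin.succ_injective _ (by rw [he, hi₀succ])
      rw [hii]; exact h₀
    · have hii₀ : i < i₀ := by
        rw [← Fin.succ_lt_succ_iff, hi₀succ]; exact hlt
      have hμ : 0 < QRep.slopeVec (skyscraper x)
          (QRep.quotDimVec V (F.W i.castSucc) (F.W i.succ)) :=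
        lt_trans hμ₀ (F.dec i i₀ hii₀)
      by_contra hcon
      have hle : Module.finrank K (F.W i.castSucc x) ≤ Module.finrank K (F.W i.succ x) :=
        Submodule.finrank_mono (F.mono i x)
      have hx0 : QRep.quotDimVec V (F.W i.castSucc) (F.W i.succ) x = 0 := by
        simp only [QRep.quotDimVec]; omega
      rw [slopeVec_skyscraper, hx0] at hμ
      norm_num at hμ
  -- the spanning subrepresentation
  set p := F.W k x with hpdef
  set S := QRep.spanAt V x p with hSdef
  have hSle : ∀ (W : ∀ z, Submodule K (V.V z)), QRep.IsSubrep V W → p ≤ W x →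
      ∀ y, S y ≤ W y := by
    intro W hW hp y
    exact le_trans (iInf_le _ W) (le_trans (iInf_le _ hW) (iInf_le _ hp))
  have hSsub : QRep.IsSubrep V S := by
    intro e
    refine le_iInf fun W => le_iInf fun hW => le_iInf fun hp => ?_
    exact le_trans (Submodule.map_mono (hSle W hW hp (σ e))) (hW e)
  have hpS : p ≤ S x := le_iInf fun W => le_iInf fun hW => le_iInf fun hp => hp
  have hSx : S x = p := le_antisymm (hSle (F.W k) (F.subrep k) le_rfl x) hpS
  have main : ∀ m : Fin (F.n+1), m ≤ k → ∀ y, F.W m y ≤ S y := by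
    intro m
    induction m using Fin.induction with
    | zero => intro _ y; rw [F.bot y]; exact bot_le
    | succ i ih =>
      intro hm y
      have hic : i.castSucc ≤ k := le_trans (le_of_lt (Fin.castSucc_lt_succ : i.castSucc < i.succ)) hm
      have hA : ∀ z, F.W i.castSucc z ≤ S z := ih hic
      by_contra hbad
      set Z : ∀ z, Submodule K (V.V z) := fun z => F.W i.succ z ⊓ S z with hZdef
      have hZsub : QRep.IsSubrep V Z := by
        intro e
        exact le_trans (Submodule.map_inf_le _) (inf_le_inf (F.subrep i.succ e) (hSsub e))
      have hAZ : ∀ z, F.W i.castSucc z ≤ Z z := fun z => le_inf (F.mono i z) (hA z)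
      have hZB : ∀ z, Z z ≤ F.W i.succ z := fun z => inf_le_left
      have hBx : F.W i.succ x ≤ S x := by
        rw [hSx]; exact Wmono k i.succ hm x
      have hZx : Z x = F.W i.succ x := inf_eq_left.mpr hBx
      have hxlt := key i (le_trans hm hkj)
      have hZneA : Z x ≠ F.W i.castSucc x := by
        intro h
        rw [hZx] at h
        rw [← h] at hxlt
        exact lt_irrefl _ hxlt
      have hss := F.ss i Z hZsub hAZ hZB ⟨x, hZneA⟩
      have hZBy : Z y < F.W i.succ y :=
        lt_of_le_of_ne (hZB y) (fun h => hbad (by rw [← h]; exact inf_le_right))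
      have hfr_le : ∀ z, Module.finrank K (Z z) ≤ Module.finrank K (F.W i.succ z) :=
        fun z => Submodule.finrank_mono (hZB z)
      have hfrA : ∀ z, Module.finrank K (F.W i.castSucc z) ≤ Module.finrank K (Z z) :=
        fun z => Submodule.finrank_mono (hAZ z)
      have hfry : Module.finrank K (Z y) < Module.finrank K (F.W i.succ y) :=
        Submodule.finrank_lt_finrank_of_lt hZBy
      have hsum : (∑ z, QRep.quotDimVec V (F.W i.castSucc) Z z) <
          ∑ z, QRep.quotDimVec V (F.W i.castSucc) (F.W i.succ) z := by
        apply Finset.sum_lt_sum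
        · intro z _
          simp only [QRep.quotDimVec]
          have h1 := hfr_le z; have h2 := hfrA z; omega
        · refine ⟨y, Finset.mem_univ y, ?_⟩
          simp only [QRep.quotDimVec]
          have h2 := hfrA y; omega
      have hcx : QRep.quotDimVec V (F.W i.castSucc) Z x =
          QRep.quotDimVec V (F.W i.castSucc) (F.W i.succ) x := by
        simp only [QRep.quotDimVec]; rw [hZx]
      have hcpos : 0 < QRep.quotDimVec V (F.W i.castSucc) (F.W i.succ) x := by
        simp only [QRep.quotDimVec]; omega
      have hcles : QRep.quotDimVec V (F.W i.castSucc) Z x ≤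
          ∑ z, QRep.quotDimVec V (F.W i.castSucc) Z z :=
        Finset.single_le_sum (fun z _ => Nat.zero_le _) (Finset.mem_univ x)
      rw [slopeVec_skyscraper, slopeVec_skyscraper, hcx] at hss
      have hcast1 : (∑ z, ((QRep.quotDimVec V (F.W i.castSucc) Z z : ℕ) : ℝ)) =
          ((∑ z, QRep.quotDimVec V (F.W i.castSucc) Z z : ℕ) : ℝ) := by push_cast; ring
      have hcast2 : (∑ z, ((QRep.quotDimVec V (F.W i.castSucc) (F.W i.succ) z : ℕ) : ℝ)) =
          ((∑ z, QRep.quotDimVec V (F.W i.castSucc) (F.W i.succ) z : ℕ) : ℝ) := by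
        push_cast; ring
      rw [hcast1, hcast2] at hss
      have hcR : (0:ℝ) < (QRep.quotDimVec V (F.W i.castSucc) (F.W i.succ) x : ℝ) := by
        exact_mod_cast hcpos
      have hs1R : (0:ℝ) < ((∑ z, QRep.quotDimVec V (F.W i.castSucc) Z z : ℕ) : ℝ) := by
        have : 0 < ∑ z, QRep.quotDimVec V (F.W i.castSucc) Z z := by
          have := hcx ▸ hcpos
          omega
        exact_mod_cast this
      have hsR : ((∑ z, QRep.quotDimVec V (F.W i.castSucc) Z z : ℕ) : ℝ) <
          ((∑ z, QRep.quotDimVec V (F.W i.castSucc) (F.W i.succ) z : ℕ) : ℝ) := by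
        exact_mod_cast hsum
      have hlt2 := div_lt_div_of_pos_left hcR hs1R hsR
      exact absurd hss (not_le.mpr hlt2)
  intro y
  exact le_antisymm (main k le_rfl y) (hSle (F.W k) (F.subrep k) le_rfl y)
end

section
/- Let V be a representation of a finite quiver Q, x ∈ Q₀ a vertex, and 0 = V⁰ ⊊ ⋯ ⊊ Vⁿ = V the HN filtration of V along the skyscraper charge δ_x, with successive quotients S^k = V^k/V^{k−1}. If j is the smallest index with V^j_x = V_x, then for every vertex y, dim ⟨V_x⟩_y = Σ_{k=1}^{j} dim S^k_y; that is, the rank invariant ρ_V(x,y) is determined by the HN type along δ_x. -/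
open scoped BigOperators

namespace RankAux

open QRep

variable {Q₀ Q₁ : Type} {σ τ : Q₁ → Q₀} {K : Type} [Field K]

lemma spanAt_le (M : QRep Q₀ Q₁ σ τ K) (x : Q₀) (p : Submodule K (M.V x))
    (W : ∀ z, Submodule K (M.V z)) (hW : IsSubrep M W) (hp : p ≤ W x) (y : Q₀) :
    spanAt M x p y ≤ W y :=
  iInf_le_of_le W (iInf_le_of_le hW (iInf_le _ hp))

lemma le_spanAt_self (M : QRep Q₀ Q₁ σ τ K) (x : Q₀) (p : Submodule K (M.V x)) :
    p ≤ spanAt M x p x :=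
  le_iInf fun _ => le_iInf fun _ => le_iInf fun hp => hp

lemma spanAt_isSubrep (M : QRep Q₀ Q₁ σ τ K) (x : Q₀) (p : Submodule K (M.V x)) :
    IsSubrep M (spanAt M x p) := by
  intro e
  refine le_iInf fun W => le_iInf fun hW => le_iInf fun hp => ?_
  exact le_trans (Submodule.map_mono (spanAt_le M x p W hW hp _)) (hW e)

lemma fin_mono {n : ℕ} (f : Fin (n + 1) → ℕ)
    (hf : ∀ i : Fin n, f i.castSucc ≤ f i.succ) :
    ∀ b a : Fin (n + 1), a ≤ b → f a ≤ f b := by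
  intro b
  induction b using Fin.induction with
  | zero => intro a ha; rw [Fin.le_zero_iff.mp ha]
  | succ i ih =>
    intro a ha
    rcases eq_or_lt_of_le ha with h | h
    · rw [h]
    · have : a ≤ i.castSucc := by
        rw [Fin.le_def]; rw [Fin.lt_def] at h
        simp only [Fin.val_succ] at h; simpa using Nat.lt_succ_iff.mp h
      exact le_trans (ih a this) (hf i)

lemma telescope {n : ℕ} (f : Fin (n + 1) → ℕ)
    (hf : ∀ i : Fin n, f i.castSucc ≤ f i.succ) (j : Fin (n + 1)) :
    ∑ k : Fin n, (if k.succ ≤ j then f k.succ - f k.castSucc else 0) = f j - f 0 := by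
  induction j using Fin.induction with
  | zero =>
    rw [Nat.sub_self]
    refine Finset.sum_eq_zero fun k _ => ?_
    rw [if_neg]
    rw [Fin.le_def]
    simp
  | succ i ih =>
    have key : ∀ k : Fin n, (if k.succ ≤ i.succ then f k.succ - f k.castSucc else 0)
        = (if k.succ ≤ i.castSucc then f k.succ - f k.castSucc else 0)
          + (if k = i then f k.succ - f k.castSucc else 0) := by
      intro k
      by_cases hk : k = i
      · subst hk
        rw [if_pos le_rfl, if_pos rfl, if_neg, Nat.zero_add]
        rw [Fin.le_def]; simp
      · simp only [if_neg hk, Nat.add_zero]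
        have hval : k.val ≠ i.val := fun h => hk (Fin.ext h)
        by_cases h1 : k.succ ≤ i.succ
        · rw [if_pos h1, if_pos]
          rw [Fin.le_def] at h1 ⊢
          simp only [Fin.val_succ, Fin.coe_castSucc] at h1 ⊢
          omega
        · rw [if_neg h1, if_neg]
          intro h2
          exact h1 (le_trans h2 (Fin.castSucc_lt_succ : i.castSucc < i.succ).le)
    rw [Finset.sum_congr rfl (fun k _ => key k), Finset.sum_add_distrib, ih]
    have h2 : (∑ k : Fin n, if k = i then f k.succ - f k.castSucc else 0)
        = f i.succ - f i.castSucc := by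
      rw [Finset.sum_ite_eq' Finset.univ i (fun k => f k.succ - f k.castSucc),
        if_pos (Finset.mem_univ i)]
    rw [h2]
    have h3 : f 0 ≤ f i.castSucc := fin_mono f hf i.castSucc 0 (Fin.zero_le _)
    have h4 : f i.castSucc ≤ f i.succ := hf i
    omega

variable [Fintype Q₀]

lemma slopeVec_skyscraper [DecidableEq Q₀] (x : Q₀) (d : Q₀ → ℕ) :
    slopeVec (skyscraper x) d = (d x : ℝ) / ∑ z, (d z : ℝ) := by
  unfold slopeVec skyscraper
  congr 1
  simp [ite_mul]

end RankAux

/-- **The rank invariant is determined by the skyscraper HN type.** Let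
`0 = V⁰ ⊊ ⋯ ⊊ Vⁿ = V` be the HN filtration of `V` along `δ_x`, with successive
quotients `S^k`, and let `j` be the smallest index with `V^j_x = V_x`. Then for every
vertex `y`, `ρ_V(x,y) = dim ⟨V_x⟩_y = Σ_{k=1}^{j} dim S^k_y`. -/
theorem rank_invariant_from_skyscraper_HN {Q₀ Q₁ : Type} [Fintype Q₀] [DecidableEq Q₀]
    {σ τ : Q₁ → Q₀} {K : Type} [Field K]
    (V : QRep Q₀ Q₁ σ τ K) (x : Q₀) (F : QRep.HNFiltration (skyscraper x) V)
    (j : Fin (F.n+1)) (hj : F.W j x = ⊤) (hjmin : ∀ i, i < j → F.W i x ≠ ⊤) :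
    ∀ y, Module.finrank K (QRep.spanAt V x (⊤ : Submodule K (V.V x)) y) =
      ∑ k : Fin F.n, if k.succ ≤ j then
          QRep.quotDimVec V (F.W k.castSucc) (F.W k.succ) y
        else 0 := by
  classical
  set U : ∀ z, Submodule K (V.V z) := QRep.spanAt V x ⊤ with hUdef
  have hUsub : QRep.IsSubrep V U := RankAux.spanAt_isSubrep V x ⊤
  have hUx : U x = ⊤ := top_le_iff.mp (RankAux.le_spanAt_self V x ⊤)
  have hmono : ∀ (i : Fin F.n) (z : Q₀),
      Module.finrank K (F.W i.castSucc z) ≤ Module.finrank K (F.W i.succ z) :=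
    fun i z => Submodule.finrank_mono (F.mono i z)
  -- positivity of the increments at `x` for steps up to `j`
  have claimA : ∀ d : ℕ, ∀ k : Fin F.n, k.succ.val + d = j.val →
      Module.finrank K (F.W k.castSucc x) < Module.finrank K (F.W k.succ x) := by
    intro d
    induction d with
    | zero =>
      intro k hk
      simp only [Fin.val_succ, Nat.add_zero] at hk
      by_contra hcon
      have heq : F.W k.castSucc x = F.W k.succ x :=
        Submodule.eq_of_le_of_finrank_le (F.mono k x) (le_of_not_gt hcon)
      have hkj : k.succ = j := Fin.ext (by simp only [Fin.val_succ]; omega)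
      refine hjmin k.castSucc ?_ ?_
      · rw [Fin.lt_def]
        simp only [Fin.coe_castSucc]
        omega
      · rw [heq, hkj, hj]
    | succ d ih =>
      intro k hk
      by_contra hcon
      have heq0 : QRep.quotDimVec V (F.W k.castSucc) (F.W k.succ) x = 0 := by
        unfold QRep.quotDimVec
        have := hmono k x
        omega
      have hzero : QRep.slopeVec (skyscraper x) (QRep.quotDimVec V (F.W k.castSucc) (F.W k.succ)) = 0 := by
        rw [RankAux.slopeVec_skyscraper, heq0]
        simp
      have hk'lt : k.val + 1 < F.n := by
        have hjle : j.val ≤ F.n := Nat.lt_succ_iff.mp j.isLt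
        simp only [Fin.val_succ] at hk
        omega
      set k' : Fin F.n := ⟨k.val + 1, hk'lt⟩ with hk'
      have hfr' : Module.finrank K (F.W k'.castSucc x) < Module.finrank K (F.W k'.succ x) := by
        refine ih k' ?_
        have h5 : k'.succ.val = k.val + 1 + 1 := rfl
        simp only [Fin.val_succ] at hk
        omega
      have hpos : 0 < QRep.slopeVec (skyscraper x) (QRep.quotDimVec V (F.W k'.castSucc) (F.W k'.succ)) := by
        rw [RankAux.slopeVec_skyscraper]
        have hnum : 0 < QRep.quotDimVec V (F.W k'.castSucc) (F.W k'.succ) x := by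
          unfold QRep.quotDimVec; omega
        have hnumR : (0 : ℝ) < (QRep.quotDimVec V (F.W k'.castSucc) (F.W k'.succ) x : ℝ) := by
          exact_mod_cast hnum
        refine div_pos hnumR (lt_of_lt_of_le hnumR ?_)
        exact Finset.single_le_sum
          (f := fun z => ((QRep.quotDimVec V (F.W k'.castSucc) (F.W k'.succ) z : ℝ)))
          (fun z _ => by positivity) (Finset.mem_univ x)
      have hdec := F.dec k k' (by rw [Fin.lt_def]; simp [hk'])
      rw [hzero] at hdec
      linarith
  -- the filtration up to `j` is contained in the spanning subrepresentation
  have hW_le_U : ∀ k : Fin (F.n + 1), k ≤ j → ∀ z, F.W k z ≤ U z := by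
    intro k
    induction k using Fin.induction with
    | zero => intro _ z; rw [F.bot z]; exact bot_le
    | succ i ih =>
      intro hij z
      have hic : i.castSucc ≤ j := le_trans (Fin.castSucc_lt_succ : i.castSucc < i.succ).le hij
      set Z : ∀ z, Submodule K (V.V z) := fun z => U z ⊓ F.W i.succ z with hZdef
      have hZsub : QRep.IsSubrep V Z := fun e =>
        le_trans (Submodule.map_inf_le _) (inf_le_inf (hUsub e) (F.subrep i.succ e))
      have hAZ : ∀ w, F.W i.castSucc w ≤ Z w := fun w => le_inf (ih hic w) (F.mono i w)
      have hZB : ∀ w, Z w ≤ F.W i.succ w := fun _ => inf_le_right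
      have hZx : Z x = F.W i.succ x := by
        show U x ⊓ F.W i.succ x = F.W i.succ x
        rw [hUx, top_inf_eq]
      have hfrx : Module.finrank K (F.W i.castSucc x) < Module.finrank K (F.W i.succ x) := by
        refine claimA (j.val - i.succ.val) i ?_
        rw [Fin.le_def] at hij
        omega
      have hne : ∃ w, Z w ≠ F.W i.castSucc w := by
        refine ⟨x, ?_⟩
        rw [hZx]
        intro h
        rw [h] at hfrx
        exact lt_irrefl _ hfrx
      have hss := F.ss i Z hZsub hAZ hZB hne
      have hZeq : ∀ w, Z w = F.W i.succ w := by
        by_contra hcon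
        push_neg at hcon
        obtain ⟨w, hw⟩ := hcon
        have hfrw : Module.finrank K (Z w) < Module.finrank K (F.W i.succ w) :=
          Submodule.finrank_lt_finrank_of_lt (lt_of_le_of_ne (hZB w) hw)
        have hle1 : ∀ u, QRep.quotDimVec V (F.W i.castSucc) Z u ≤
            QRep.quotDimVec V (F.W i.castSucc) (F.W i.succ) u := fun u =>
          Nat.sub_le_sub_right (Submodule.finrank_mono (hZB u)) _
        have hlt1 : QRep.quotDimVec V (F.W i.castSucc) Z w <
            QRep.quotDimVec V (F.W i.castSucc) (F.W i.succ) w := by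
          have h1 : Module.finrank K (F.W i.castSucc w) ≤ Module.finrank K (Z w) :=
            Submodule.finrank_mono (hAZ w)
          unfold QRep.quotDimVec
          omega
        have hnumeq : QRep.quotDimVec V (F.W i.castSucc) Z x =
            QRep.quotDimVec V (F.W i.castSucc) (F.W i.succ) x := by
          unfold QRep.quotDimVec
          rw [hZx]
        have hnumpos : 0 < QRep.quotDimVec V (F.W i.castSucc) (F.W i.succ) x := by
          unfold QRep.quotDimVec; omega
        have hsumlt : (∑ u, (QRep.quotDimVec V (F.W i.castSucc) Z u : ℝ)) <
            ∑ u, (QRep.quotDimVec V (F.W i.castSucc) (F.W i.succ) u : ℝ) := by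
          refine Finset.sum_lt_sum (fun u _ => by exact_mod_cast hle1 u)
            ⟨w, Finset.mem_univ w, by exact_mod_cast hlt1⟩
        have hsumpos : (0 : ℝ) < ∑ u, (QRep.quotDimVec V (F.W i.castSucc) Z u : ℝ) := by
          have : (0 : ℝ) < (QRep.quotDimVec V (F.W i.castSucc) Z x : ℝ) := by
            rw [hnumeq]; exact_mod_cast hnumpos
          refine lt_of_lt_of_le this ?_
          exact Finset.single_le_sum
            (f := fun u => ((QRep.quotDimVec V (F.W i.castSucc) Z u : ℝ)))
            (fun u _ => by positivity) (Finset.mem_univ x)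
        rw [RankAux.slopeVec_skyscraper, RankAux.slopeVec_skyscraper] at hss
        have hkey : ((QRep.quotDimVec V (F.W i.castSucc) (F.W i.succ) x : ℝ)) /
              (∑ u, (QRep.quotDimVec V (F.W i.castSucc) (F.W i.succ) u : ℝ)) <
            ((QRep.quotDimVec V (F.W i.castSucc) (F.W i.succ) x : ℝ)) /
              (∑ u, (QRep.quotDimVec V (F.W i.castSucc) Z u : ℝ)) :=
          div_lt_div_of_pos_left (by exact_mod_cast hnumpos) hsumpos hsumlt
        rw [hnumeq] at hss
        linarith
      rw [← hZeq z]
      exact inf_le_left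
  have hUeq : ∀ z, U z = F.W j z := fun z =>
    le_antisymm (RankAux.spanAt_le V x ⊤ (F.W j) (F.subrep j) (by rw [hj]) z)
      (hW_le_U j le_rfl z)
  intro y
  rw [hUeq y]
  have htel := RankAux.telescope (fun k => Module.finrank K (F.W k y))
    (fun i => Submodule.finrank_mono (F.mono i y)) j
  have hb : Module.finrank K (F.W 0 y) = 0 := by
    rw [F.bot y, finrank_bot]
  simp only [hb, Nat.sub_zero] at htel
  rw [← htel]
  rfl
end

section
/- There exist two representations W and W' of the commutative square quiver (grid quiver of shape (1,1)) that have the same rank invariant ρ_W = ρ_{W'} but different Harder-Narasimhan types along the skyscraper central charge at the minimal vertex; explicitly, W with bottom-left space 𝔽², bottom-right and top-left spaces 𝔽, maps [1,0] rightward and [0,1] upward, is δ_x-semistable, while W' with the same spaces but upward map [1,0] has a two-step HN filtration along δ_x. -/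
open scoped BigOperators

/-! The commutative square quiver (grid quiver of shape (1,1)):
vertices `0 = x` (bottom-left), `1 = y` (bottom-right), `2 = z` (top-left),
`3 = w` (top-right); edges `0 : x→y`, `1 : x→z`, `2 : y→w`, `3 : z→w`. -/

def sqSrc : Fin 4 → Fin 4
  | ⟨0, _⟩ => 0
  | ⟨1, _⟩ => 0
  | ⟨2, _⟩ => 1
  | ⟨_+3, _⟩ => 2

def sqTgt : Fin 4 → Fin 4
  | ⟨0, _⟩ => 1
  | ⟨1, _⟩ => 2
  | ⟨2, _⟩ => 3
  | ⟨_+3, _⟩ => 3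

variable (K : Type) [Field K]

/-- Vertex spaces: `𝔽²` at the bottom-left, `𝔽` at bottom-right and top-left, `0` at top-right. -/
def sqSpace : Fin 4 → Type
  | ⟨0, _⟩ => Fin 2 → K
  | ⟨1, _⟩ => K
  | ⟨2, _⟩ => K
  | ⟨_+3, _⟩ => ↥(⊥ : Submodule K K)

instance sqSpace.addgrp : ∀ i, AddCommGroup (sqSpace K i)
  | ⟨0, _⟩ => inferInstanceAs (AddCommGroup (Fin 2 → K))
  | ⟨1, _⟩ => inferInstanceAs (AddCommGroup K)
  | ⟨2, _⟩ => inferInstanceAs (AddCommGroup K)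
  | ⟨_+3, _⟩ => inferInstanceAs (AddCommGroup ↥(⊥ : Submodule K K))

instance sqSpace.mod : ∀ i, Module K (sqSpace K i)
  | ⟨0, _⟩ => inferInstanceAs (Module K (Fin 2 → K))
  | ⟨1, _⟩ => inferInstanceAs (Module K K)
  | ⟨2, _⟩ => inferInstanceAs (Module K K)
  | ⟨_+3, _⟩ => inferInstanceAs (Module K ↥(⊥ : Submodule K K))

instance sqSpace.fd : ∀ i, FiniteDimensional K (sqSpace K i)
  | ⟨0, _⟩ => inferInstanceAs (FiniteDimensional K (Fin 2 → K))
  | ⟨1, _⟩ => inferInstanceAs (FiniteDimensional K K)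
  | ⟨2, _⟩ => inferInstanceAs (FiniteDimensional K K)
  | ⟨_+3, _⟩ => inferInstanceAs (FiniteDimensional K ↥(⊥ : Submodule K K))

/-- The representation `W`: rightward map `[1,0]`, upward map `[0,1]`. -/
noncomputable def sqW : QRep (Fin 4) (Fin 4) sqSrc sqTgt K where
  V := sqSpace K
  f
  | ⟨0, _⟩ => LinearMap.proj 0
  | ⟨1, _⟩ => LinearMap.proj 1
  | ⟨2, _⟩ => 0
  | ⟨_+3, _⟩ => 0

/-- The representation `W'`: rightward map `[1,0]`, upward map `[1,0]`. -/
noncomputable def sqW' : QRep (Fin 4) (Fin 4) sqSrc sqTgt K where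
  V := sqSpace K
  f
  | ⟨0, _⟩ => LinearMap.proj 0
  | ⟨1, _⟩ => LinearMap.proj 0
  | ⟨2, _⟩ => 0
  | ⟨_+3, _⟩ => 0

namespace SqAux
open QRep Module Submodule

variable {K : Type} [Field K]

lemma slope4 (d : Fin 4 → ℕ) :
    QRep.slopeVec (skyscraper (0 : Fin 4)) d = (d 0 : ℝ) / ((d 0 : ℝ) + d 1 + d 2 + d 3) := by
  unfold QRep.slopeVec
  rw [Fin.sum_univ_four, Fin.sum_univ_four]
  simp [skyscraper, show (1:Fin 4) ≠ 0 from by decide, show (2:Fin 4) ≠ 0 from by decide,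
    show (3:Fin 4) ≠ 0 from by decide]

lemma frk0 : Module.finrank K (sqSpace K 0) = 2 := by
  show Module.finrank K (Fin 2 → K) = 2; exact Module.finrank_fin_fun K
lemma frk1 : Module.finrank K (sqSpace K 1) = 1 := Module.finrank_self K
lemma frk2 : Module.finrank K (sqSpace K 2) = 1 := Module.finrank_self K
lemma frk3 : Module.finrank K (sqSpace K 3) = 0 := by
  show Module.finrank K ↥(⊥ : Submodule K K) = 0; exact finrank_bot K K

lemma sub3 (Z : Submodule K (sqSpace K 3)) : Module.finrank K Z = 0 :=
  Nat.le_zero.mp (le_trans (Submodule.finrank_le Z) (le_of_eq frk3))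

instance : Subsingleton (sqSpace K 3) := by
  show Subsingleton ↥(⊥ : Submodule K K); infer_instance

lemma mem3 (P : Submodule K (sqSpace K 3)) (v : sqSpace K 3) : v ∈ P := by
  have hv : v = 0 := Subsingleton.elim v 0
  rw [hv]; exact P.zero_mem

/-- the kernel of the first projection -/
noncomputable def kerp : Submodule K (Fin 2 → K) :=
  LinearMap.ker ((LinearMap.proj 0 : (Fin 2 → K) →ₗ[K] K))

lemma frk_kerp : Module.finrank K (kerp (K := K)) = 1 := by
  have hs : Function.Surjective ((LinearMap.proj 0 : (Fin 2 → K) →ₗ[K] K)) :=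
    fun c => ⟨fun _ => c, rfl⟩
  have h := LinearMap.finrank_range_add_finrank_ker ((LinearMap.proj 0 : (Fin 2 → K) →ₗ[K] K))
  rw [LinearMap.range_eq_top.mpr hs, finrank_top, Module.finrank_self,
    Module.finrank_fin_fun] at h
  unfold kerp; omega

lemma slope_sqW : QRep.slope (skyscraper (0 : Fin 4)) (sqW K) = 1/2 := by
  unfold QRep.slope
  rw [slope4]
  have e0 : QRep.dimVec (sqW K) 0 = 2 := frk0
  have e1 : QRep.dimVec (sqW K) 1 = 1 := frk1
  have e2 : QRep.dimVec (sqW K) 2 = 1 := frk2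
  have e3 : QRep.dimVec (sqW K) 3 = 0 := frk3
  rw [e0, e1, e2, e3]; norm_num


lemma key_ineq (Z : ∀ x, Submodule K ((sqW K).V x)) (hZ : QRep.IsSubrep (sqW K) Z) :
    Module.finrank K (Z 0) ≤ Module.finrank K (Z 1) + Module.finrank K (Z 2) := by
  have h1 : ∀ v : Fin 2 → K, v ∈ Z 0 → v 0 ∈ Z 1 :=
    fun v hv => hZ 0 (Submodule.mem_map_of_mem hv)
  have h2 : ∀ v : Fin 2 → K, v ∈ Z 0 → v 1 ∈ Z 2 :=
    fun v hv => hZ 1 (Submodule.mem_map_of_mem hv)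
  let L : Z 0 →ₗ[K] (Z 1 × Z 2) :=
    { toFun := fun v => (⟨(v.val : Fin 2 → K) 0, h1 v.val v.2⟩, ⟨(v.val : Fin 2 → K) 1, h2 v.val v.2⟩)
      map_add' := by intro a b; ext <;> rfl
      map_smul' := by intro c a; ext <;> rfl }
  have hinj : Function.Injective L := by
    rw [← LinearMap.ker_eq_bot]
    apply LinearMap.ker_eq_bot'.mpr
    intro m hm
    have e0 : (m.val : Fin 2 → K) 0 = 0 := congrArg Subtype.val (congrArg Prod.fst hm)
    have e1 : (m.val : Fin 2 → K) 1 = 0 := congrArg Subtype.val (congrArg Prod.snd hm)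
    apply Subtype.ext; funext i; fin_cases i
    · exact e0
    · exact e1
  have h := LinearMap.finrank_le_finrank_of_injective hinj
  rwa [Module.finrank_prod] at h

lemma semistable_sqW : QRep.Semistable (skyscraper (0 : Fin 4)) (sqW K) := by
  intro Z hZ _
  rw [slope_sqW, slope4]
  have key := key_ineq Z hZ
  have e3 : QRep.dimVecOf (sqW K) Z 3 = 0 := sub3 (Z 3)
  rw [e3]
  have ka : (QRep.dimVecOf (sqW K) Z 0 : ℝ) ≤ QRep.dimVecOf (sqW K) Z 1 + QRep.dimVecOf (sqW K) Z 2 := by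
    exact_mod_cast key
  set A := (QRep.dimVecOf (sqW K) Z 0 : ℝ) with hA
  set B := (QRep.dimVecOf (sqW K) Z 1 : ℝ) with hB
  set C := (QRep.dimVecOf (sqW K) Z 2 : ℝ) with hC
  have hA0 : 0 ≤ A := by rw [hA]; positivity
  have hB0 : 0 ≤ B := by rw [hB]; positivity
  have hC0 : 0 ≤ C := by rw [hC]; positivity
  push_cast
  rcases eq_or_lt_of_le (show (0:ℝ) ≤ A + B + C + 0 by linarith) with h | h
  · have hd : A + B + C + 0 = 0 := h.symm
    rw [hd, div_zero]; norm_num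
  · rw [div_le_div_iff₀ h (by norm_num : (0:ℝ) < 2)]; linarith

lemma spanAt_eq {Q₀ Q₁ : Type} {σ τ : Q₁ → Q₀} (M : QRep Q₀ Q₁ σ τ K) (x : Q₀)
    (p : Submodule K (M.V x)) (S : ∀ y, Submodule K (M.V y)) (hS : QRep.IsSubrep M S)
    (hp : p ≤ S x) (hmin : ∀ Z, QRep.IsSubrep M Z → p ≤ Z x → ∀ y, S y ≤ Z y) (y : Q₀) :
    QRep.spanAt M x p y = S y := by
  unfold QRep.spanAt
  apply le_antisymm
  · exact iInf_le_of_le S (iInf_le_of_le hS (iInf_le _ hp))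
  · simp only [le_iInf_iff]
    intro Z hZ hpZ
    exact hmin Z hZ hpZ y


/-- family: everything -/
def topF : ∀ x : Fin 4, Submodule K (sqSpace K x) := fun _ => ⊤
/-- family: nothing -/
def botF : ∀ x : Fin 4, Submodule K (sqSpace K x) := fun _ => ⊥
/-- family: everything at one vertex, nothing elsewhere -/
def atF (j : Fin 4) : ∀ x : Fin 4, Submodule K (sqSpace K x) := fun x => if x = j then ⊤ else ⊥

lemma isSubrep_topF_W : QRep.IsSubrep (sqW K) (topF (K := K)) := fun _ => le_top
lemma isSubrep_topF_W' : QRep.IsSubrep (sqW' K) (topF (K := K)) := fun _ => le_top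

lemma min_topF_W (Z : ∀ x, Submodule K ((sqW K).V x)) (hZ : QRep.IsSubrep (sqW K) Z)
    (hp : (⊤ : Submodule K ((sqW K).V 0)) ≤ Z 0) : ∀ y, topF (K := K) y ≤ Z y := by
  intro y; fin_cases y
  · exact le_trans le_top hp
  · intro c _
    exact hZ 0 (Submodule.mem_map_of_mem (p := Z 0) (r := (fun _ => c : Fin 2 → K)) (hp trivial))
  · intro c _
    exact hZ 1 (Submodule.mem_map_of_mem (p := Z 0) (r := (fun _ => c : Fin 2 → K)) (hp trivial))
  · intro v _; exact mem3 _ v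

lemma min_topF_W' (Z : ∀ x, Submodule K ((sqW' K).V x)) (hZ : QRep.IsSubrep (sqW' K) Z)
    (hp : (⊤ : Submodule K ((sqW' K).V 0)) ≤ Z 0) : ∀ y, topF (K := K) y ≤ Z y := by
  intro y; fin_cases y
  · exact le_trans le_top hp
  · intro c _
    exact hZ 0 (Submodule.mem_map_of_mem (p := Z 0) (r := (fun _ => c : Fin 2 → K)) (hp trivial))
  · intro c _
    exact hZ 1 (Submodule.mem_map_of_mem (p := Z 0) (r := (fun _ => c : Fin 2 → K)) (hp trivial))
  · intro v _; exact mem3 _ v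

lemma isSubrep_atF_W (j : Fin 4) (hj : j ≠ 0) : QRep.IsSubrep (sqW K) (atF (K := K) j) := by
  intro e; fin_cases e
  · show Submodule.map _ (atF (K := K) j 0) ≤ atF (K := K) j 1
    rw [show atF (K := K) j 0 = ⊥ from if_neg (Ne.symm hj)]; refine le_trans (le_of_eq (Submodule.map_bot ..)) ?_
    exact bot_le
  · show Submodule.map _ (atF (K := K) j 0) ≤ atF (K := K) j 2
    rw [show atF (K := K) j 0 = ⊥ from if_neg (Ne.symm hj)]; refine le_trans (le_of_eq (Submodule.map_bot ..)) ?_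
    exact bot_le
  · intro v _; exact mem3 _ v
  · intro v _; exact mem3 _ v

lemma isSubrep_atF_W' (j : Fin 4) (hj : j ≠ 0) : QRep.IsSubrep (sqW' K) (atF (K := K) j) := by
  intro e; fin_cases e
  · show Submodule.map _ (atF (K := K) j 0) ≤ atF (K := K) j 1
    rw [show atF (K := K) j 0 = ⊥ from if_neg (Ne.symm hj)]; refine le_trans (le_of_eq (Submodule.map_bot ..)) ?_
    exact bot_le
  · show Submodule.map _ (atF (K := K) j 0) ≤ atF (K := K) j 2
    rw [show atF (K := K) j 0 = ⊥ from if_neg (Ne.symm hj)]; refine le_trans (le_of_eq (Submodule.map_bot ..)) ?_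
    exact bot_le
  · intro v _; exact mem3 _ v
  · intro v _; exact mem3 _ v

lemma min_atF_W (j : Fin 4)
    (Z : ∀ x, Submodule K ((sqW K).V x)) (hp : (⊤ : Submodule K ((sqW K).V j)) ≤ Z j) :
    ∀ y, atF (K := K) j y ≤ Z y := by
  intro y
  rcases eq_or_ne y j with h | h
  · subst h; rw [show atF (K := K) y y = ⊤ from if_pos rfl]; exact hp
  · rw [show atF (K := K) j y = ⊥ from if_neg h]; exact bot_le

lemma min_atF_W' (j : Fin 4)
    (Z : ∀ x, Submodule K ((sqW' K).V x)) (hp : (⊤ : Submodule K ((sqW' K).V j)) ≤ Z j) :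
    ∀ y, atF (K := K) j y ≤ Z y := by
  intro y
  rcases eq_or_ne y j with h | h
  · subst h; rw [show atF (K := K) y y = ⊤ from if_pos rfl]; exact hp
  · rw [show atF (K := K) j y = ⊥ from if_neg h]; exact bot_le

lemma part1 : ∀ u v : Fin 4,
    Module.finrank K (QRep.spanAt (sqW K) u (⊤ : Submodule K ((sqW K).V u)) v) =
      Module.finrank K (QRep.spanAt (sqW' K) u (⊤ : Submodule K ((sqW' K).V u)) v) := by
  have h0 : ∀ v : Fin 4,
      Module.finrank K (QRep.spanAt (sqW K) 0 (⊤ : Submodule K ((sqW K).V 0)) v) =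
        Module.finrank K (QRep.spanAt (sqW' K) 0 (⊤ : Submodule K ((sqW' K).V 0)) v) := by
    intro v
    rw [spanAt_eq (sqW K) 0 ⊤ (topF (K := K)) (isSubrep_topF_W) le_top
        (fun Z hZ hp => min_topF_W Z hZ hp) v,
      spanAt_eq (sqW' K) 0 ⊤ (topF (K := K)) (isSubrep_topF_W') le_top
        (fun Z hZ hp => min_topF_W' Z hZ hp) v]
    rfl
  have hj : ∀ j : Fin 4, j ≠ 0 → ∀ v : Fin 4,
      Module.finrank K (QRep.spanAt (sqW K) j (⊤ : Submodule K ((sqW K).V j)) v) =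
        Module.finrank K (QRep.spanAt (sqW' K) j (⊤ : Submodule K ((sqW' K).V j)) v) := by
    intro j hjne v
    rw [spanAt_eq (sqW K) j ⊤ (atF (K := K) j) (isSubrep_atF_W j hjne)
        (le_of_eq (if_pos rfl).symm) (fun Z hZ hp => min_atF_W j Z hp) v,
      spanAt_eq (sqW' K) j ⊤ (atF (K := K) j) (isSubrep_atF_W' j hjne)
        (le_of_eq (if_pos rfl).symm) (fun Z hZ hp => min_atF_W' j Z hp) v]
    rfl
  intro u v
  rcases eq_or_ne u 0 with h | h
  · subst h; exact h0 v
  · exact hj u h v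


/-- The family `A`: kernel of the first projection at `x`, zero elsewhere. -/
noncomputable def aF : ∀ x : Fin 4, Submodule K (sqSpace K x)
  | ⟨0, _⟩ => kerp
  | ⟨1, _⟩ => ⊥
  | ⟨2, _⟩ => ⊥
  | ⟨_+3, _⟩ => ⊥

lemma aF0 : aF (K := K) 0 = kerp := rfl
lemma aF1 : aF (K := K) 1 = ⊥ := rfl
lemma aF2 : aF (K := K) 2 = ⊥ := rfl
lemma aF3 : aF (K := K) 3 = ⊥ := rfl

lemma mem_kerp {v : Fin 2 → K} (hv : v ∈ kerp (K := K)) : v 0 = 0 := hv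

lemma isSubrep_aF : QRep.IsSubrep (sqW' K) (aF (K := K)) := by
  intro e; fin_cases e
  · rintro c ⟨v, hv, rfl⟩
    show (v : Fin 2 → K) 0 ∈ (⊥ : Submodule K K)
    rw [Submodule.mem_bot]; exact mem_kerp hv
  · rintro c ⟨v, hv, rfl⟩
    show (v : Fin 2 → K) 0 ∈ (⊥ : Submodule K K)
    rw [Submodule.mem_bot]; exact mem_kerp hv
  · intro v _; exact mem3 _ v
  · intro v _; exact mem3 _ v

lemma isSubrep_botF_W' : QRep.IsSubrep (sqW' K) (botF (K := K)) := by
  intro e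
  rw [show botF (K := K) (sqSrc e) = ⊥ from rfl]; refine le_trans (le_of_eq (Submodule.map_bot ..)) ?_
  exact bot_le

lemma frk_bot_sq (x : Fin 4) : Module.finrank K (botF (K := K) x) = 0 := finrank_bot K _
lemma frk_top0 : Module.finrank K (topF (K := K) 0) = 2 := (finrank_top K _).trans frk0
lemma frk_top1 : Module.finrank K (topF (K := K) 1) = 1 := (finrank_top K _).trans frk1
lemma frk_top2 : Module.finrank K (topF (K := K) 2) = 1 := (finrank_top K _).trans frk2
lemma frk_top3 : Module.finrank K (topF (K := K) 3) = 0 := (finrank_top K _).trans frk3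
lemma frk_aF0 : Module.finrank K (aF (K := K) 0) = 1 := frk_kerp

/-- slope of the first subquotient of the HN filtration of `W'` -/
lemma slope_bot_aF :
    QRep.slopeVec (skyscraper (0 : Fin 4)) (QRep.quotDimVec (sqW' K) (botF (K := K)) (aF (K := K))) = 1 := by
  rw [slope4]
  have e0 : QRep.quotDimVec (sqW' K) (botF (K := K)) (aF (K := K)) 0 = 1 := by
    show Module.finrank K (aF (K := K) 0) - Module.finrank K (botF (K := K) 0) = 1
    rw [frk_aF0, frk_bot_sq]
  have e1 : QRep.quotDimVec (sqW' K) (botF (K := K)) (aF (K := K)) 1 = 0 := by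
    show Module.finrank K (aF (K := K) 1) - Module.finrank K (botF (K := K) 1) = 0
    rw [aF1]; simp
  have e2 : QRep.quotDimVec (sqW' K) (botF (K := K)) (aF (K := K)) 2 = 0 := by
    show Module.finrank K (aF (K := K) 2) - Module.finrank K (botF (K := K) 2) = 0
    rw [aF2]; simp
  have e3 : QRep.quotDimVec (sqW' K) (botF (K := K)) (aF (K := K)) 3 = 0 := by
    show Module.finrank K (aF (K := K) 3) - Module.finrank K (botF (K := K) 3) = 0
    rw [aF3]; simp
  rw [e0, e1, e2, e3]; norm_num

/-- slope of the second subquotient -/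
lemma slope_aF_top :
    QRep.slopeVec (skyscraper (0 : Fin 4)) (QRep.quotDimVec (sqW' K) (aF (K := K)) (topF (K := K))) = 1/3 := by
  rw [slope4]
  have e0 : QRep.quotDimVec (sqW' K) (aF (K := K)) (topF (K := K)) 0 = 1 := by
    show Module.finrank K (topF (K := K) 0) - Module.finrank K (aF (K := K) 0) = 1
    rw [frk_aF0, frk_top0]
  have e1 : QRep.quotDimVec (sqW' K) (aF (K := K)) (topF (K := K)) 1 = 1 := by
    show Module.finrank K (topF (K := K) 1) - Module.finrank K (aF (K := K) 1) = 1
    rw [aF1, frk_top1]; simp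
  have e2 : QRep.quotDimVec (sqW' K) (aF (K := K)) (topF (K := K)) 2 = 1 := by
    show Module.finrank K (topF (K := K) 2) - Module.finrank K (aF (K := K) 2) = 1
    rw [aF2, frk_top2]; simp
  have e3 : QRep.quotDimVec (sqW' K) (aF (K := K)) (topF (K := K)) 3 = 0 := by
    show Module.finrank K (topF (K := K) 3) - Module.finrank K (aF (K := K) 3) = 0
    rw [aF3, frk_top3]; simp
  rw [e0, e1, e2, e3]; norm_num


lemma ss_bot_aF : QRep.SemistableQuot (skyscraper (0 : Fin 4)) (sqW' K)
    (botF (K := K)) (aF (K := K)) := by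
  intro Z hZ hbz hza hne
  rw [slope_bot_aF, slope4]
  apply div_le_one_of_le₀
  · have h1 : (0:ℝ) ≤ QRep.quotDimVec (sqW' K) (botF (K := K)) Z 1 := Nat.cast_nonneg _
    have h2 : (0:ℝ) ≤ QRep.quotDimVec (sqW' K) (botF (K := K)) Z 2 := Nat.cast_nonneg _
    have h3 : (0:ℝ) ≤ QRep.quotDimVec (sqW' K) (botF (K := K)) Z 3 := Nat.cast_nonneg _
    linarith
  · have h0 : (0:ℝ) ≤ QRep.quotDimVec (sqW' K) (botF (K := K)) Z 0 := Nat.cast_nonneg _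
    have h1 : (0:ℝ) ≤ QRep.quotDimVec (sqW' K) (botF (K := K)) Z 1 := Nat.cast_nonneg _
    have h2 : (0:ℝ) ≤ QRep.quotDimVec (sqW' K) (botF (K := K)) Z 2 := Nat.cast_nonneg _
    have h3 : (0:ℝ) ≤ QRep.quotDimVec (sqW' K) (botF (K := K)) Z 3 := Nat.cast_nonneg _
    linarith

lemma ss_aF_top : QRep.SemistableQuot (skyscraper (0 : Fin 4)) (sqW' K)
    (aF (K := K)) (topF (K := K)) := by
  intro Z hZ haz hzt hne
  rw [slope_aF_top, slope4]
  have hle2 : Module.finrank K (Z 0) ≤ 2 := (Submodule.finrank_le (Z 0)).trans (le_of_eq frk0)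
  rcases Nat.lt_or_ge (Module.finrank K (Z 0)) 2 with h | h
  · have hnum : QRep.quotDimVec (sqW' K) (aF (K := K)) Z 0 = 0 := by
      show Module.finrank K (Z 0) - Module.finrank K (aF (K := K) 0) = 0
      rw [frk_aF0]; omega
    rw [hnum]
    simp only [Nat.cast_zero, zero_div]
    norm_num
  · have h2 : Module.finrank K (Z 0) = 2 := le_antisymm hle2 h
    have hz0 : Z 0 = ⊤ := Submodule.eq_top_of_finrank_eq (by rw [h2]; exact frk0.symm)
    have hz1 : Z 1 = ⊤ := by
      rw [eq_top_iff]; intro c _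
      exact hZ 0 (Submodule.mem_map_of_mem (p := Z 0) (r := (fun _ => c : Fin 2 → K))
        (by rw [hz0]; trivial))
    have hz2 : Z 2 = ⊤ := by
      rw [eq_top_iff]; intro c _
      exact hZ 1 (Submodule.mem_map_of_mem (p := Z 0) (r := (fun _ => c : Fin 2 → K))
        (by rw [hz0]; trivial))
    have e0 : QRep.quotDimVec (sqW' K) (aF (K := K)) Z 0 = 1 := by
      show Module.finrank K (Z 0) - Module.finrank K (aF (K := K) 0) = 1
      rw [h2, frk_aF0]
    have e1 : QRep.quotDimVec (sqW' K) (aF (K := K)) Z 1 = 1 := by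
      show Module.finrank K (Z 1) - Module.finrank K (aF (K := K) 1) = 1
      have ht : Module.finrank K (Z 1) = 1 := by
        rw [hz1]; exact (finrank_top K _).trans frk1
      rw [ht, aF1, finrank_bot]
    have e2 : QRep.quotDimVec (sqW' K) (aF (K := K)) Z 2 = 1 := by
      show Module.finrank K (Z 2) - Module.finrank K (aF (K := K) 2) = 1
      have ht : Module.finrank K (Z 2) = 1 := by
        rw [hz2]; exact (finrank_top K _).trans frk2
      rw [ht, aF2, finrank_bot]
    have e3 : QRep.quotDimVec (sqW' K) (aF (K := K)) Z 3 = 0 := by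
      show Module.finrank K (Z 3) - Module.finrank K (aF (K := K) 3) = 0
      have h3 : Module.finrank K (Z 3) = 0 := sub3 (Z 3)
      omega
    rw [e0, e1, e2, e3]; norm_num

lemma bot_ne_kerp : (⊥ : Submodule K (Fin 2 → K)) ≠ kerp := by
  intro h
  have h1 := frk_kerp (K := K)
  rw [← h, finrank_bot] at h1
  exact absurd h1 (by omega)

lemma kerp_ne_top : (kerp : Submodule K (Fin 2 → K)) ≠ ⊤ := by
  intro h
  have h1 := frk_kerp (K := K)
  rw [h] at h1
  have h2 := (finrank_top K (Fin 2 → K)).trans (Module.finrank_fin_fun K)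
  omega

/-- the filtration 0 ⊆ A ⊆ W' -/
noncomputable def fil : Fin 3 → ∀ x : Fin 4, Submodule K (sqSpace K x)
  | ⟨0, _⟩ => botF
  | ⟨1, _⟩ => aF
  | ⟨_+2, _⟩ => topF

/-- The HN filtration of `W'` along the skyscraper charge. -/
noncomputable def hnW' : QRep.HNFiltration (skyscraper (0 : Fin 4)) (sqW' K) where
  n := 2
  W := fil
  subrep := by
    intro i; fin_cases i
    · exact isSubrep_botF_W'
    · exact isSubrep_aF
    · exact isSubrep_topF_W'
  bot := fun _ => rfl
  top := fun _ => rfl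
  mono := by
    intro i x; fin_cases i
    · exact bot_le
    · exact le_top
  proper := by
    intro i; fin_cases i
    · exact ⟨0, fun h => bot_ne_kerp (K := K) h⟩
    · exact ⟨0, fun h => kerp_ne_top (K := K) h⟩
  ss := by
    intro i; fin_cases i
    · exact ss_bot_aF
    · exact ss_aF_top
  dec := by
    intro i j hij
    fin_cases i <;> fin_cases j
    · exact absurd hij (by decide)
    · show QRep.slopeVec (skyscraper (0 : Fin 4)) (QRep.quotDimVec (sqW' K) (aF (K := K)) (topF (K := K))) <
        QRep.slopeVec (skyscraper (0 : Fin 4)) (QRep.quotDimVec (sqW' K) (botF (K := K)) (aF (K := K)))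
      rw [slope_aF_top, slope_bot_aF]; norm_num
    · exact absurd hij (by decide)
    · exact absurd hij (by decide)


/-- Every quotient slope of an HN filtration of `W` is at most `1/2`. -/
lemma claimA (F : QRep.HNFiltration (skyscraper (0 : Fin 4)) (sqW K)) (i : Fin F.n) :
    QRep.slopeVec (skyscraper (0 : Fin 4))
      (QRep.quotDimVec (sqW K) (F.W i.castSucc) (F.W i.succ)) ≤ 1/2 := by
  haveI : NeZero F.n := ⟨by have h := i.isLt; omega⟩
  have hcs : Fin.castSucc (0 : Fin F.n) = (0 : Fin (F.n+1)) := Fin.ext (by simp)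
  have h0 : QRep.slopeVec (skyscraper (0 : Fin 4))
      (QRep.quotDimVec (sqW K) (F.W (Fin.castSucc 0)) (F.W (Fin.succ 0))) ≤ 1/2 := by
    have hsub := F.subrep (Fin.succ 0)
    have hne : ∃ x, F.W (Fin.succ 0) x ≠ ⊥ := by
      obtain ⟨x, hx⟩ := F.proper 0
      refine ⟨x, fun h => hx ?_⟩
      rw [hcs, F.bot x, h]
    have hs := semistable_sqW (K := K) (F.W (Fin.succ 0)) hsub hne
    rw [slope_sqW] at hs
    have hq : QRep.quotDimVec (sqW K) (F.W (Fin.castSucc 0)) (F.W (Fin.succ 0)) =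
        QRep.dimVecOf (sqW K) (F.W (Fin.succ 0)) := by
      funext x
      show Module.finrank K (F.W (Fin.succ 0) x) - Module.finrank K (F.W (Fin.castSucc 0) x) =
        Module.finrank K (F.W (Fin.succ 0) x)
      rw [hcs, F.bot x, finrank_bot, Nat.sub_zero]
    rw [hq]
    exact hs
  rcases eq_or_ne i 0 with h | h
  · subst h; exact h0
  · have hv : i.val ≠ 0 := fun hv => h (Fin.ext (by simp [hv]))
    have hpos : (0 : Fin F.n) < i := by
      rw [Fin.lt_def, Fin.val_zero]; omega
    exact ((F.dec 0 i hpos).le).trans h0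

lemma Gn_pos (G : QRep.HNFiltration (skyscraper (0 : Fin 4)) (sqW' K)) : 0 < G.n := by
  by_contra hc
  push_neg at hc
  have hg0 : G.n = 0 := by omega
  have h2 := G.top 0
  have hl : (Fin.last G.n) = (0 : Fin (G.n+1)) := Fin.ext (by simp [hg0])
  rw [hl, G.bot 0] at h2
  have h3 : Module.finrank K ((⊥ : Submodule K ((sqW' K).V 0))) =
      Module.finrank K ((⊤ : Submodule K ((sqW' K).V 0))) := by rw [h2]
  rw [finrank_bot, finrank_top] at h3
  have h4 : Module.finrank K ((sqW' K).V 0) = 2 := frk0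
  omega

lemma sup_kerp_finrank (U : Submodule K (Fin 2 → K)) (h : ¬ kerp (K := K) ≤ U) :
    Module.finrank K ↥(U ⊔ kerp (K := K)) = Module.finrank K ↥U + 1 := by
  have hle1 : Module.finrank K ↥(U ⊓ kerp (K := K)) ≤ 1 :=
    (Submodule.finrank_mono inf_le_right).trans (le_of_eq frk_kerp)
  have hne1 : Module.finrank K ↥(U ⊓ kerp (K := K)) ≠ 1 := by
    intro h1
    have heq := Submodule.eq_of_le_of_finrank_eq
      (inf_le_right : U ⊓ kerp (K := K) ≤ kerp (K := K)) (h1.trans frk_kerp.symm)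
    exact h (heq ▸ inf_le_left)
  have hinf : Module.finrank K ↥(U ⊓ kerp (K := K)) = 0 := by omega
  have hsup := Submodule.finrank_sup_add_finrank_inf_eq U (kerp (K := K))
  rw [hinf, frk_kerp] at hsup
  omega

lemma claimB (G : QRep.HNFiltration (skyscraper (0 : Fin 4)) (sqW' K)) :
    1 ≤ QRep.slopeVec (skyscraper (0 : Fin 4)) (QRep.quotDimVec (sqW' K)
      (G.W (Fin.castSucc ⟨0, Gn_pos G⟩)) (G.W (Fin.succ ⟨0, Gn_pos G⟩))) := by
  classical
  let P : ℕ → Prop := fun k => ∀ hk : k < G.n + 1, kerp (K := K) ≤ G.W ⟨k, hk⟩ 0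
  have hPn : P G.n := by
    intro hk
    have hl : (⟨G.n, hk⟩ : Fin (G.n+1)) = Fin.last G.n := rfl
    rw [hl, G.top 0]; exact le_top
  have hex : ∃ k, P k := ⟨G.n, hPn⟩
  have hk0 : P (Nat.find hex) := Nat.find_spec hex
  have hk0le : Nat.find hex ≤ G.n := Nat.find_min' hex hPn
  have hk0pos : 0 < Nat.find hex := by
    rcases Nat.eq_zero_or_pos (Nat.find hex) with h0 | h
    · exfalso
      have h1 := hk0
      rw [h0] at h1
      have h2 := h1 (by omega)
      have h3 : (⟨0, by omega⟩ : Fin (G.n+1)) = 0 := rfl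
      rw [h3, G.bot 0] at h2
      have h4 := le_bot_iff.mp h2
      have h5 := frk_kerp (K := K)
      rw [h4] at h5
      rw [finrank_bot] at h5
      exact absurd h5 (by omega)
    · exact h
  set k0 := Nat.find hex with hk0def
  have hGn := Gn_pos G
  let i : Fin G.n := ⟨k0 - 1, by omega⟩
  have hisucc : Fin.succ i = (⟨k0, by omega⟩ : Fin (G.n+1)) := Fin.ext (by show k0 - 1 + 1 = k0; omega)
  have hicast : Fin.castSucc i = (⟨k0 - 1, by omega⟩ : Fin (G.n+1)) := Fin.ext rfl
  have hA_le : kerp (K := K) ≤ G.W (Fin.succ i) 0 := by rw [hisucc]; exact hk0 _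
  have hA_nle : ¬ kerp (K := K) ≤ G.W (Fin.castSucc i) 0 := by
    rw [hicast]
    intro hcon
    exact Nat.find_min hex (show k0 - 1 < k0 by omega) (fun hk => hcon)
  -- the perturbed subrepresentation
  let Z : ∀ x, Submodule K ((sqW' K).V x) := fun x => G.W (Fin.castSucc i) x ⊔ aF (K := K) x
  have hZsub : QRep.IsSubrep (sqW' K) Z := by
    intro e
    have hU := G.subrep (Fin.castSucc i) e
    fin_cases e
    · show Submodule.map ((sqW' K).f 0) (G.W (Fin.castSucc i) 0 ⊔ aF (K := K) 0) ≤
        G.W (Fin.castSucc i) 1 ⊔ aF (K := K) 1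
      refine le_trans (le_of_eq (Submodule.map_sup ..)) ?_
      apply sup_le
      · exact le_trans hU le_sup_left
      · rintro c ⟨v, hv, rfl⟩
        have h0 : (v : Fin 2 → K) 0 = 0 := mem_kerp hv
        show (v : Fin 2 → K) 0 ∈ _
        rw [h0]; exact Submodule.zero_mem _
    · show Submodule.map ((sqW' K).f 1) (G.W (Fin.castSucc i) 0 ⊔ aF (K := K) 0) ≤
        G.W (Fin.castSucc i) 2 ⊔ aF (K := K) 2
      refine le_trans (le_of_eq (Submodule.map_sup ..)) ?_
      apply sup_le
      · exact le_trans hU le_sup_left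
      · rintro c ⟨v, hv, rfl⟩
        have h0 : (v : Fin 2 → K) 0 = 0 := mem_kerp hv
        show (v : Fin 2 → K) 0 ∈ _
        rw [h0]; exact Submodule.zero_mem _
    · intro v _; exact mem3 _ v
    · intro v _; exact mem3 _ v
  have hUZ : ∀ x, G.W (Fin.castSucc i) x ≤ Z x := fun x => le_sup_left
  have hZV : ∀ x, Z x ≤ G.W (Fin.succ i) x := by
    intro x
    apply sup_le (G.mono i x)
    fin_cases x
    · exact hA_le
    · exact bot_le
    · exact bot_le
    · exact bot_le
  have hne : ∃ x, Z x ≠ G.W (Fin.castSucc i) x := by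
    refine ⟨0, fun h => hA_nle ?_⟩
    exact le_trans le_sup_right (le_of_eq h)
  have hss := G.ss i Z hZsub hUZ hZV hne
  -- the subquotient Z / W_i has slope 1
  have hfin : Module.finrank K (Z 0) = Module.finrank K (G.W (Fin.castSucc i) 0) + 1 :=
    sup_kerp_finrank (G.W (Fin.castSucc i) 0) hA_nle
  have hq0 : QRep.quotDimVec (sqW' K) (G.W (Fin.castSucc i)) Z 0 = 1 := by
    show Module.finrank K (Z 0) - Module.finrank K (G.W (Fin.castSucc i) 0) = 1
    omega
  have hq1 : QRep.quotDimVec (sqW' K) (G.W (Fin.castSucc i)) Z 1 = 0 := by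
    have hz : Z 1 = G.W (Fin.castSucc i) 1 := by
      show G.W (Fin.castSucc i) 1 ⊔ aF (K := K) 1 = G.W (Fin.castSucc i) 1
      rw [aF1]; exact sup_bot_eq ..
    show Module.finrank K (Z 1) - Module.finrank K (G.W (Fin.castSucc i) 1) = 0
    rw [hz]; omega
  have hq2 : QRep.quotDimVec (sqW' K) (G.W (Fin.castSucc i)) Z 2 = 0 := by
    have hz : Z 2 = G.W (Fin.castSucc i) 2 := by
      show G.W (Fin.castSucc i) 2 ⊔ aF (K := K) 2 = G.W (Fin.castSucc i) 2
      rw [aF2]; exact sup_bot_eq ..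
    show Module.finrank K (Z 2) - Module.finrank K (G.W (Fin.castSucc i) 2) = 0
    rw [hz]; omega
  have hq3 : QRep.quotDimVec (sqW' K) (G.W (Fin.castSucc i)) Z 3 = 0 := by
    have hz : Z 3 = G.W (Fin.castSucc i) 3 := by
      show G.W (Fin.castSucc i) 3 ⊔ aF (K := K) 3 = G.W (Fin.castSucc i) 3
      rw [aF3]; exact sup_bot_eq ..
    show Module.finrank K (Z 3) - Module.finrank K (G.W (Fin.castSucc i) 3) = 0
    rw [hz]; omega
  have hLHS : QRep.slopeVec (skyscraper (0 : Fin 4))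
      (QRep.quotDimVec (sqW' K) (G.W (Fin.castSucc i)) Z) = 1 := by
    rw [slope4, hq0, hq1, hq2, hq3]; norm_num
  have h1le : 1 ≤ QRep.slopeVec (skyscraper (0 : Fin 4))
      (QRep.quotDimVec (sqW' K) (G.W (Fin.castSucc i)) (G.W (Fin.succ i))) := by
    rw [← hLHS]; exact hss
  rcases eq_or_ne i ⟨0, Gn_pos G⟩ with h | h
  · rw [← h]; exact h1le
  · have hv : i.val ≠ 0 := fun hv => h (Fin.ext hv)
    have hpos : (⟨0, Gn_pos G⟩ : Fin G.n) < i := by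
      rw [Fin.lt_def]; show 0 < i.val; omega
    exact h1le.trans (G.dec ⟨0, Gn_pos G⟩ i hpos).le


lemma part4 (F : QRep.HNFiltration (skyscraper (0 : Fin 4)) (sqW K))
    (G : QRep.HNFiltration (skyscraper (0 : Fin 4)) (sqW' K)) :
    F.typeFun ≠ G.typeFun := by
  intro h
  have hn := Gn_pos G
  set μ := QRep.slopeVec (skyscraper (0 : Fin 4)) (QRep.quotDimVec (sqW' K)
    (G.W (Fin.castSucc ⟨0, hn⟩)) (G.W (Fin.succ ⟨0, hn⟩))) with hμ
  have hμ1 : (1:ℝ) ≤ μ := claimB G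
  have hd0 : 0 < QRep.quotDimVec (sqW' K)
      (G.W (Fin.castSucc ⟨0, hn⟩)) (G.W (Fin.succ ⟨0, hn⟩)) 0 := by
    by_contra hc
    push_neg at hc
    have hc0 : QRep.quotDimVec (sqW' K)
        (G.W (Fin.castSucc ⟨0, hn⟩)) (G.W (Fin.succ ⟨0, hn⟩)) 0 = 0 := by omega
    rw [slope4, hc0] at hμ
    simp only [Nat.cast_zero, zero_div] at hμ
    linarith
  have hF0 : F.typeFun μ 0 = 0 := by
    unfold QRep.HNFiltration.typeFun
    apply Finset.sum_eq_zero
    intro j _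
    have hcond : ¬ (QRep.slopeVec (skyscraper (0 : Fin 4))
        (QRep.quotDimVec (sqW K) (F.W j.castSucc) (F.W j.succ)) = μ) := by
      intro hcond
      have hA := claimA F j
      rw [hcond] at hA
      linarith
    rw [if_neg hcond]
  have hG0 : 0 < G.typeFun μ 0 := by
    unfold QRep.HNFiltration.typeFun
    refine lt_of_lt_of_le ?_ (Finset.single_le_sum
      (f := fun j : Fin G.n => if QRep.slopeVec (skyscraper (0 : Fin 4))
        (QRep.quotDimVec (sqW' K) (G.W j.castSucc) (G.W j.succ)) = μ then
          QRep.quotDimVec (sqW' K) (G.W j.castSucc) (G.W j.succ) 0 else 0)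
      (fun j _ => Nat.zero_le _) (Finset.mem_univ (⟨0, hn⟩ : Fin G.n)))
    beta_reduce
    rw [if_pos hμ.symm]
    exact hd0
  rw [h] at hF0
  omega

end SqAux

/-- **The skyscraper invariant is strictly finer than the rank invariant.** The
representations `W` and `W'` of the commutative square quiver have equal rank invariants
`ρ_W = ρ_{W'}`, yet different HN types along the skyscraper charge at the minimal
vertex `x`: `W` is `δ_x`-semistable while `W'` has a two-step HN filtration. -/
theorem rank_invariant_not_finer_than_skyscraper :
    (∀ u v : Fin 4,
      Module.finrank K (QRep.spanAt (sqW K) u (⊤ : Submodule K ((sqW K).V u)) v) =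
      Module.finrank K (QRep.spanAt (sqW' K) u (⊤ : Submodule K ((sqW' K).V u)) v)) ∧
    QRep.Semistable (skyscraper (0 : Fin 4)) (sqW K) ∧
    (∃ F : QRep.HNFiltration (skyscraper (0 : Fin 4)) (sqW' K), F.n = 2) ∧
    (∀ (F : QRep.HNFiltration (skyscraper (0 : Fin 4)) (sqW K))
       (G : QRep.HNFiltration (skyscraper (0 : Fin 4)) (sqW' K)),
       F.typeFun ≠ G.typeFun) :=
  ⟨SqAux.part1, SqAux.semistable_sqW, ⟨SqAux.hnW', rfl⟩, SqAux.part4⟩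
end
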